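/- arXiv:2302.07724 — 5 statements merged into one kernel-verified Lean document; each statement's English description precedes it below -/
import Mathlib

section
/- For every sequence ρ : ℤ → I and every j ∈ ℤ, the difference of consecutive discrete nonlocal terms satisfies the upper bound V_{j−1}(ρ) − V_j(ρ) ≤ ‖v'‖·γ_0·(ρmax − ρ_j). -/
open Finset Set

/-- Discrete nonlocal term `V_j(ρ) = v(∑_{k=0}^{N-1} γ_k ρ_{j+k+1})`. -/
noncomputable def Vj (v : ℝ → ℝ) (γ : ℕ → ℝ) (N : ℕ) (ρ : ℤ → ℝ) (j : ℤ) : ℝ :=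
  v (∑ k ∈ Finset.range N, γ k * ρ (j + (k : ℤ) + 1))

/-- Supremum of `f` over a set. -/
noncomputable def supIm (f : ℝ → ℝ) (s : Set ℝ) : ℝ := sSup (f '' s)

lemma stmt3_key
    (ρmax : ℝ)
    (N : ℕ) (hN : 1 ≤ N)
    (γ : ℕ → ℝ) (hγnn : ∀ k < N, 0 ≤ γ k)
    (hγmono : ∀ k : ℕ, 1 ≤ k → k ≤ N - 1 → γ k ≤ γ (k - 1))
    (ρ : ℤ → ℝ) (hρ : ∀ j, ρ j ≤ ρmax) (j : ℤ) :
    (∑ k ∈ Finset.range N, γ k * ρ (j + (k:ℤ) + 1))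
      - (∑ k ∈ Finset.range N, γ k * ρ (j - 1 + (k:ℤ) + 1))
      ≤ γ 0 * (ρmax - ρ j) := by
  set σ : ℕ → ℝ := fun k => ρ (j + k) with hσ
  have hA : (∑ k ∈ Finset.range N, γ k * ρ (j - 1 + (k:ℤ) + 1))
      = ∑ k ∈ Finset.range N, γ k * σ k := by
    apply Finset.sum_congr rfl; intro k _; congr 1; simp [hσ]; ring_nf
  have hB : (∑ k ∈ Finset.range N, γ k * ρ (j + (k:ℤ) + 1))
      = ∑ k ∈ Finset.range N, γ k * σ (k + 1) := by
    apply Finset.sum_congr rfl; intro k _; congr 1; simp [hσ]; ring_nf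
  rw [hA, hB, ← Finset.sum_sub_distrib]
  have hdiff : ∀ k, γ k * σ (k+1) - γ k * σ k = γ k • (σ (k+1) - σ k) := by
    intro k; simp [smul_eq_mul]; ring
  simp_rw [hdiff]
  rw [Finset.sum_range_by_parts γ (fun k => σ (k+1) - σ k) N]
  have hG : ∀ n : ℕ, (∑ i ∈ Finset.range n, (σ (i+1) - σ i)) = σ n - σ 0 :=
    fun n => Finset.sum_range_sub σ n
  simp only [hG, smul_eq_mul]
  have hσ0 : σ 0 = ρ j := by simp [hσ]
  have hσmax : ∀ k, σ k ≤ ρmax := fun k => hρ _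
  have hterm : ∀ k ∈ Finset.range (N-1),
      -((γ (k+1) - γ k) * (σ (k+1) - σ 0)) ≤ (γ k - γ (k+1)) * (ρmax - σ 0) := by
    intro k hk
    rw [Finset.mem_range] at hk
    have h1 : γ (k+1) ≤ γ k := by
      have := hγmono (k+1) (by omega) (by omega)
      simpa using this
    have h2 : σ (k+1) - σ 0 ≤ ρmax - σ 0 := by linarith [hσmax (k+1)]
    have : -((γ (k+1) - γ k) * (σ (k+1) - σ 0)) = (γ k - γ (k+1)) * (σ (k+1) - σ 0) := by ring
    rw [this]
    exact mul_le_mul_of_nonneg_left h2 (by linarith)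
  have htel : (∑ k ∈ Finset.range (N-1), (γ k - γ (k+1))) = γ 0 - γ (N-1) :=
    Finset.sum_range_sub' γ (N-1)
  have hsum : -(∑ k ∈ Finset.range (N-1), (γ (k+1) - γ k) * (σ (k+1) - σ 0))
      ≤ (γ 0 - γ (N-1)) * (ρmax - σ 0) := by
    rw [← htel, Finset.sum_mul, ← Finset.sum_neg_distrib]
    exact Finset.sum_le_sum hterm
  have hlast : γ (N-1) * (σ N - σ 0) ≤ γ (N-1) * (ρmax - σ 0) :=
    mul_le_mul_of_nonneg_left (by linarith [hσmax N]) (hγnn (N-1) (by omega))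
  rw [hσ0] at *
  nlinarith [hsum, hlast]

theorem stmt3
    (ρmin ρmax : ℝ) (hρmin : 0 ≤ ρmin) (hI : ρmin ≤ ρmax)
    (N : ℕ) (hN : 1 ≤ N)
    (γ : ℕ → ℝ) (hγnn : ∀ k < N, 0 ≤ γ k)
    (hγmono : ∀ k : ℕ, 1 ≤ k → k ≤ N - 1 → γ k ≤ γ (k - 1))
    (hγsum : ∑ k ∈ Finset.range N, γ k ≤ 1)
    (v v' : ℝ → ℝ)
    (hv : ∀ x ∈ Icc (0 : ℝ) ρmax, HasDerivWithinAt v (v' x) (Icc (0 : ℝ) ρmax) x)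
    (hv'cont : ContinuousOn v' (Icc (0 : ℝ) ρmax))
    (hv'np : ∀ x ∈ Icc (0 : ℝ) ρmax, v' x ≤ 0)
    (ρ : ℤ → ℝ) (hρ : ∀ j, ρ j ∈ Icc ρmin ρmax) (j : ℤ) :
    Vj v γ N ρ (j - 1) - Vj v γ N ρ j ≤
      supIm (fun x => |v' x|) (Icc (0 : ℝ) ρmax) * γ 0 * (ρmax - ρ j) := by
  have hρmax0 : (0:ℝ) ≤ ρmax := le_trans hρmin hI
  set M := supIm (fun x => |v' x|) (Icc (0 : ℝ) ρmax) with hM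
  -- M is an upper bound for |v'| on Icc, and M ≥ 0
  have hcpt : IsCompact ((fun x => |v' x|) '' Icc (0:ℝ) ρmax) :=
    (isCompact_Icc).image_of_continuousOn (hv'cont.abs)
  have hMub : ∀ x ∈ Icc (0:ℝ) ρmax, |v' x| ≤ M := by
    intro x hx
    exact le_csSup hcpt.bddAbove ⟨x, hx, rfl⟩
  have hM0 : 0 ≤ M := le_trans (abs_nonneg _) (hMub 0 ⟨le_refl _, hρmax0⟩)
  -- the two sums lie in Icc 0 ρmax
  have hmem : ∀ j' : ℤ, (∑ k ∈ Finset.range N, γ k * ρ (j' + (k:ℤ) + 1)) ∈ Icc (0:ℝ) ρmax := by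
    intro j'
    constructor
    · apply Finset.sum_nonneg
      intro k hk
      exact mul_nonneg (hγnn k (Finset.mem_range.mp hk))
        (le_trans hρmin (hρ _).1)
    · calc (∑ k ∈ Finset.range N, γ k * ρ (j' + (k:ℤ) + 1))
          ≤ ∑ k ∈ Finset.range N, γ k * ρmax := by
            apply Finset.sum_le_sum
            intro k hk
            exact mul_le_mul_of_nonneg_left (hρ _).2 (hγnn k (Finset.mem_range.mp hk))
      _ = (∑ k ∈ Finset.range N, γ k) * ρmax := by rw [Finset.sum_mul]
      _ ≤ 1 * ρmax := mul_le_mul_of_nonneg_right hγsum hρmax0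
      _ = ρmax := one_mul _
  set A := ∑ k ∈ Finset.range N, γ k * ρ (j - 1 + (k:ℤ) + 1) with hAdef
  set B := ∑ k ∈ Finset.range N, γ k * ρ (j + (k:ℤ) + 1) with hBdef
  have hAmem : A ∈ Icc (0:ℝ) ρmax := hmem (j-1)
  have hBmem : B ∈ Icc (0:ℝ) ρmax := hmem j
  have hγ0 : 0 ≤ γ 0 := hγnn 0 (by omega)
  have hρj : ρmax - ρ j ≥ 0 := by linarith [(hρ j).2]
  have hkey : B - A ≤ γ 0 * (ρmax - ρ j) :=
    stmt3_key ρmax N hN γ hγnn hγmono ρ (fun j => (hρ j).2) j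
  have hRHS : 0 ≤ M * γ 0 * (ρmax - ρ j) := by positivity
  show v A - v B ≤ M * γ 0 * (ρmax - ρ j)
  rcases le_or_gt B A with hBA | hAB
  · -- v antitone on Icc
    have hanti : AntitoneOn v (Icc (0:ℝ) ρmax) := by
      apply AntitoneOn.mono (antitoneOn_of_deriv_nonpos (convex_Icc _ _)
        (fun x hx => (hv x hx).continuousWithinAt) ?_ ?_) (le_refl _)
      · intro x hx
        rw [interior_Icc] at hx
        exact ((hv x (Ioo_subset_Icc_self hx)).hasDerivAt
          (Icc_mem_nhds hx.1 hx.2)).differentiableAt.differentiableWithinAt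
      · intro x hx
        rw [interior_Icc] at hx
        rw [((hv x (Ioo_subset_Icc_self hx)).hasDerivAt (Icc_mem_nhds hx.1 hx.2)).deriv]
        exact hv'np x (Ioo_subset_Icc_self hx)
    have : v A ≤ v B := hanti hBmem hAmem hBA
    linarith
  · -- Lipschitz bound
    have hlip : ‖v A - v B‖ ≤ M * ‖A - B‖ :=
      (convex_Icc (0:ℝ) ρmax).norm_image_sub_le_of_norm_hasDerivWithin_le
        hv (fun x hx => by simpa using hMub x hx) hBmem hAmem
    rw [Real.norm_eq_abs, Real.norm_eq_abs] at hlip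
    have h1 : v A - v B ≤ M * |A - B| := le_trans (le_abs_self _) hlip
    have h2 : |A - B| = B - A := by rw [abs_sub_comm]; exact abs_of_pos (by linarith)
    have h3 : M * (B - A) ≤ M * (γ 0 * (ρmax - ρ j)) :=
      mul_le_mul_of_nonneg_left hkey hM0
    calc v A - v B ≤ M * (B - A) := by rw [← h2]; exact h1
      _ ≤ M * (γ 0 * (ρmax - ρ j)) := h3
      _ = M * γ 0 * (ρmax - ρ j) := by ring
end

section
/- For every sequence ρ : ℤ → I and every j ∈ ℤ, the difference of consecutive discrete nonlocal terms satisfies the lower bound V_{j−1}(ρ) − V_j(ρ) ≥ −‖v'‖·γ_0·(ρ_j − ρmin). -/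
open Finset Set

theorem stmt4
    (ρmin ρmax : ℝ) (hρmin : 0 ≤ ρmin) (hI : ρmin ≤ ρmax)
    (N : ℕ) (hN : 1 ≤ N)
    (γ : ℕ → ℝ) (hγnn : ∀ k < N, 0 ≤ γ k)
    (hγmono : ∀ k : ℕ, 1 ≤ k → k ≤ N - 1 → γ k ≤ γ (k - 1))
    (hγsum : ∑ k ∈ Finset.range N, γ k ≤ 1)
    (v v' : ℝ → ℝ)
    (hv : ∀ x ∈ Icc (0 : ℝ) ρmax, HasDerivWithinAt v (v' x) (Icc (0 : ℝ) ρmax) x)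
    (hv'cont : ContinuousOn v' (Icc (0 : ℝ) ρmax))
    (hv'np : ∀ x ∈ Icc (0 : ℝ) ρmax, v' x ≤ 0)
    (ρ : ℤ → ℝ) (hρ : ∀ j, ρ j ∈ Icc ρmin ρmax) (j : ℤ) :
    -(supIm (fun x => |v' x|) (Icc (0 : ℝ) ρmax) * γ 0 * (ρ j - ρmin)) ≤
      Vj v γ N ρ (j - 1) - Vj v γ N ρ j := by
  obtain ⟨m, rfl⟩ : ∃ m, N = m + 1 := ⟨N - 1, (Nat.succ_pred_eq_of_pos hN).symm⟩
  set a : ℕ → ℝ := fun k => ρ (j + (k : ℤ)) with ha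
  have ha0max : 0 ≤ ρmax := le_trans hρmin hI
  set M := supIm (fun x => |v' x|) (Icc (0 : ℝ) ρmax) with hM
  -- basic facts about M
  have hne : (Icc (0 : ℝ) ρmax).Nonempty := ⟨0, le_refl _, ha0max⟩
  have hbdd : BddAbove ((fun x => |v' x|) '' Icc (0 : ℝ) ρmax) := by
    apply IsCompact.bddAbove_image isCompact_Icc
    exact hv'cont.abs
  have hMle : ∀ x ∈ Icc (0 : ℝ) ρmax, |v' x| ≤ M :=
    fun x hx => le_csSup hbdd ⟨x, hx, rfl⟩
  have hM0 : 0 ≤ M := le_trans (abs_nonneg _) (hMle 0 ⟨le_refl _, ha0max⟩)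
  -- γ facts
  have hγ0 : 0 ≤ γ 0 := hγnn 0 (Nat.succ_pos m)
  have hγm : 0 ≤ γ m := hγnn m (Nat.lt_succ_self m)
  -- the two sums
  set S1 := ∑ k ∈ Finset.range (m + 1), γ k * a k with hS1
  set S0 := ∑ k ∈ Finset.range (m + 1), γ k * a (k + 1) with hS0
  have hVj1 : Vj v γ (m + 1) ρ (j - 1) = v S1 := by
    unfold Vj
    congr 1
    apply Finset.sum_congr rfl
    intro k _
    congr 2
    ring
  have hVj0 : Vj v γ (m + 1) ρ j = v S0 := by
    unfold Vj
    congr 1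
    apply Finset.sum_congr rfl
    intro k _
    congr 2
    push_cast
    ring
  -- membership of sums in Icc 0 ρmax
  have hsum_mem : ∀ b : ℕ → ℝ, (∀ k, b k ∈ Icc ρmin ρmax) →
      (∑ k ∈ Finset.range (m + 1), γ k * b k) ∈ Icc (0 : ℝ) ρmax := by
    intro b hb
    constructor
    · apply Finset.sum_nonneg
      intro k hk
      exact mul_nonneg (hγnn k (Finset.mem_range.mp hk)) (le_trans hρmin (hb k).1)
    · calc ∑ k ∈ Finset.range (m + 1), γ k * b k
          ≤ ∑ k ∈ Finset.range (m + 1), γ k * ρmax := by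
            apply Finset.sum_le_sum
            intro k hk
            exact mul_le_mul_of_nonneg_left (hb k).2 (hγnn k (Finset.mem_range.mp hk))
        _ = (∑ k ∈ Finset.range (m + 1), γ k) * ρmax := by rw [Finset.sum_mul]
        _ ≤ 1 * ρmax := mul_le_mul_of_nonneg_right hγsum ha0max
        _ = ρmax := one_mul _
  have hS1mem : S1 ∈ Icc (0 : ℝ) ρmax := hsum_mem a (fun k => hρ _)
  have hS0mem : S0 ∈ Icc (0 : ℝ) ρmax := hsum_mem (fun k => a (k + 1)) (fun k => hρ _)
  -- key algebraic bound : S1 - S0 ≤ γ 0 * (a 0 - ρmin)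
  have hkey : S1 - S0 ≤ γ 0 * (a 0 - ρmin) := by
    have h1 : S1 = γ 0 * a 0 + ∑ k ∈ Finset.range m, γ (k + 1) * a (k + 1) := by
      rw [hS1, Finset.sum_range_succ']
      ring
    have h2 : S0 = (∑ k ∈ Finset.range m, γ k * a (k + 1)) + γ m * a (m + 1) := by
      rw [hS0, Finset.sum_range_succ]
    rw [h1, h2]
    have hbound : ∑ k ∈ Finset.range m, (γ (k + 1) - γ k) * a (k + 1)
        ≤ ∑ k ∈ Finset.range m, (γ (k + 1) - γ k) * ρmin := by
      apply Finset.sum_le_sum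
      intro k hk
      have hk' : k < m := Finset.mem_range.mp hk
      have hmono : γ (k + 1) ≤ γ k := by
        have := hγmono (k + 1) (Nat.succ_le_succ (Nat.zero_le k)) (by omega)
        simpa using this
      exact mul_le_mul_of_nonpos_left (hρ _).1 (by linarith)
    have htel : ∑ k ∈ Finset.range m, (γ (k + 1) - γ k) * ρmin = (γ m - γ 0) * ρmin := by
      rw [← Finset.sum_mul, Finset.sum_range_sub]
    have hlast : γ m * ρmin ≤ γ m * a (m + 1) :=
      mul_le_mul_of_nonneg_left (hρ _).1 hγm
    have hsub : ∑ k ∈ Finset.range m, γ (k + 1) * a (k + 1)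
        - ∑ k ∈ Finset.range m, γ k * a (k + 1)
        = ∑ k ∈ Finset.range m, (γ (k + 1) - γ k) * a (k + 1) := by
      rw [← Finset.sum_sub_distrib]
      apply Finset.sum_congr rfl
      intro k _
      ring
    nlinarith [hbound, htel, hlast, hsub]
  rw [hVj1, hVj0]
  have hRHSnn : 0 ≤ M * γ 0 * (ρ j - ρmin) := by
    exact mul_nonneg (mul_nonneg hM0 hγ0) (sub_nonneg.mpr (hρ j).1)
  have ha0 : a 0 = ρ j := by simp [ha]
  by_cases hcmp : S1 ≤ S0
  · -- v antitone, so v S1 - v S0 ≥ 0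
    have hcont : ContinuousOn v (Icc (0 : ℝ) ρmax) :=
      fun x hx => (hv x hx).continuousWithinAt
    have hanti : AntitoneOn v (Icc (0 : ℝ) ρmax) := by
      apply antitoneOn_of_deriv_nonpos (convex_Icc _ _) hcont
      · intro x hx
        have hx' : x ∈ Icc (0 : ℝ) ρmax := interior_subset hx
        exact ((hv x hx').hasDerivAt (mem_interior_iff_mem_nhds.mp hx)).differentiableAt.differentiableWithinAt
      · intro x hx
        have hx' : x ∈ Icc (0 : ℝ) ρmax := interior_subset hx
        rw [((hv x hx').hasDerivAt (mem_interior_iff_mem_nhds.mp hx)).deriv]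
        exact hv'np x hx'
    have : v S0 ≤ v S1 := hanti hS1mem hS0mem hcmp
    linarith
  · push_neg at hcmp
    have hlip : |v S1 - v S0| ≤ M * |S1 - S0| := by
      have := Convex.norm_image_sub_le_of_norm_hasDerivWithin_le hv
        (fun x hx => by rw [Real.norm_eq_abs]; exact hMle x hx)
        (convex_Icc _ _) hS0mem hS1mem
      simpa [Real.norm_eq_abs] using this
    have habs : |S1 - S0| = S1 - S0 := abs_of_pos (by linarith)
    have h1 : -(M * (S1 - S0)) ≤ v S1 - v S0 := by
      rw [habs] at hlip
      have := neg_abs_le (v S1 - v S0)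
      linarith
    have h2 : M * (S1 - S0) ≤ M * (γ 0 * (a 0 - ρmin)) :=
      mul_le_mul_of_nonneg_left hkey hM0
    rw [ha0] at h2
    nlinarith
end

section
/- Assume additionally that v is twice continuously differentiable on [0, ρmax] with ‖v''‖ := sup_{[0,ρmax]} |v''|, that ω0 > 0 satisfies γ_0 ≤ Δx·ω0, and that the CFL condition λ·(‖G‖·‖v'‖·γ_0 + L1 + L2) ≤ 1 holds. If ρ : ℤ → I has summable differences, Σ_{j∈ℤ} |ρ_{j+1} − ρ_j| < ∞, then after one step of the scheme the total variation satisfies Σ_{j∈ℤ} |(Sρ)_{j+1} − (Sρ)_j| ≤ (1 + Δt·ω0·( ‖v'‖·(2‖g‖ + ‖g'‖·ρmax) + 2‖v''‖·‖g‖·ρmax ))·Σ_{j∈ℤ} |ρ_{j+1} − ρ_j|. -/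
open Finset Set

/-- One step of the scheme. -/
noncomputable def schemeS (lam : ℝ) (G : ℝ → ℝ → ℝ) (v : ℝ → ℝ) (γ : ℕ → ℝ) (N : ℕ)
    (ρ : ℤ → ℝ) : ℤ → ℝ := fun j =>
  ρ j - lam * (G (ρ j) (ρ (j + 1)) * Vj v γ N ρ j
    - G (ρ (j - 1)) (ρ j) * Vj v γ N ρ (j - 1))

/-- Supremum of `|G|` over `s × s`. -/
noncomputable def supIm2 (G : ℝ → ℝ → ℝ) (s : Set ℝ) : ℝ :=
  sSup ((fun p : ℝ × ℝ => |G p.1 p.2|) '' (s ×ˢ s))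

noncomputable def auxS (ρ : ℤ → ℝ) (γ : ℕ → ℝ) (N : ℕ) (j : ℤ) : ℝ :=
  ∑ k ∈ Finset.range N, γ k * ρ (j + (k : ℤ) + 1)

def auxD (ρ : ℤ → ℝ) (j : ℤ) : ℝ := ρ (j + 1) - ρ j

lemma Vj_eq (v : ℝ → ℝ) (γ : ℕ → ℝ) (N : ℕ) (ρ : ℤ → ℝ) (j : ℤ) :
    Vj v γ N ρ j = v (auxS ρ γ N j) := rfl

noncomputable def auxa (lam : ℝ) (G : ℝ → ℝ → ℝ) (g v : ℝ → ℝ) (γ : ℕ → ℝ) (N : ℕ)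
    (ρ : ℤ → ℝ) (j : ℤ) : ℝ :=
  lam * ((g (ρ (j+1)) - G (ρ j) (ρ (j+1))) * v (auxS ρ γ N j))

noncomputable def auxb (lam : ℝ) (G : ℝ → ℝ → ℝ) (g v : ℝ → ℝ) (γ : ℕ → ℝ) (N : ℕ)
    (ρ : ℤ → ℝ) (j : ℤ) : ℝ :=
  lam * ((g (ρ j) - G (ρ j) (ρ (j+1))) * v (auxS ρ γ N j))

noncomputable def auxW (g v : ℝ → ℝ) (γ : ℕ → ℝ) (N : ℕ) (ρ : ℤ → ℝ) (j : ℤ) : ℝ :=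
  g (ρ (j+1)) * (v (auxS ρ γ N (j+1)) - v (auxS ρ γ N j))
    - g (ρ j) * (v (auxS ρ γ N j) - v (auxS ρ γ N (j-1)))

noncomputable def auxR (γ : ℕ → ℝ) (n : ℕ) (ρ : ℤ → ℝ) (j : ℤ) : ℝ :=
  γ n * |auxD ρ (j + ((n : ℤ) + 1))| + γ 0 * |auxD ρ j|
    + ∑ k ∈ Finset.range n, (γ k - γ (k+1)) * |auxD ρ (j + ((k : ℤ) + 1))|

noncomputable def auxR' (γ : ℕ → ℝ) (N : ℕ) (ρ : ℤ → ℝ) (j : ℤ) : ℝ :=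
  ∑ k ∈ Finset.range N, γ k * |auxD ρ (j + ((k : ℤ) + 1))|

lemma aux_sum_shift_summable {f : ℤ → ℝ} (hf : Summable f) (d : ℤ) :
    Summable fun j : ℤ => f (j + d) := ((Equiv.addRight d).summable_iff).mpr hf

lemma aux_sum_shift_tsum (f : ℤ → ℝ) (d : ℤ) : ∑' j : ℤ, f (j + d) = ∑' j, f j :=
  (Equiv.addRight d).tsum_eq f

lemma aux_abel (γ u : ℕ → ℝ) (n : ℕ) :
    ∑ k ∈ Finset.range (n+1), γ k * (u (k+1) - u k)
      = γ n * u (n+1) - γ 0 * u 0 + ∑ k ∈ Finset.range n, (γ k - γ (k+1)) * u (k+1) := by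
  induction n with
  | zero => rw [Finset.sum_range_one, Finset.sum_range_zero]; ring
  | succ m ih =>
      rw [Finset.sum_range_succ, ih, Finset.sum_range_succ]; ring

lemma aux_abel_bound (γ u : ℕ → ℝ) (n : ℕ) (M : ℝ)
    (hγnn : ∀ k ≤ n, 0 ≤ γ k) (hstep : ∀ k < n, γ (k+1) ≤ γ k)
    (hu : ∀ k ≤ n+1, u k ∈ Set.Icc (0:ℝ) M) :
    |∑ k ∈ Finset.range (n+1), γ k * (u (k+1) - u k)| ≤ γ 0 * M := by
  rw [aux_abel]
  have htel : ∑ k ∈ Finset.range n, (γ k - γ (k+1)) = γ 0 - γ n := Finset.sum_range_sub' γ n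
  have h1 : γ n * u (n+1) ≤ γ n * M :=
    mul_le_mul_of_nonneg_left (hu (n+1) le_rfl).2 (hγnn n le_rfl)
  have h1' : 0 ≤ γ n * u (n+1) := mul_nonneg (hγnn n le_rfl) (hu (n+1) le_rfl).1
  have h2 : 0 ≤ γ 0 * u 0 := mul_nonneg (hγnn 0 (Nat.zero_le n)) (hu 0 (Nat.zero_le _)).1
  have h2' : γ 0 * u 0 ≤ γ 0 * M :=
    mul_le_mul_of_nonneg_left (hu 0 (Nat.zero_le _)).2 (hγnn 0 (Nat.zero_le n))
  have h3 : ∑ k ∈ Finset.range n, (γ k - γ (k+1)) * u (k+1)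
      ≤ ∑ k ∈ Finset.range n, (γ k - γ (k+1)) * M := by
    refine Finset.sum_le_sum fun k hk => ?_
    exact mul_le_mul_of_nonneg_left (hu (k+1) (by have := Finset.mem_range.1 hk; omega)).2
      (sub_nonneg.2 (hstep k (Finset.mem_range.1 hk)))
  have h3' : 0 ≤ ∑ k ∈ Finset.range n, (γ k - γ (k+1)) * u (k+1) := by
    refine Finset.sum_nonneg fun k hk => ?_
    exact mul_nonneg (sub_nonneg.2 (hstep k (Finset.mem_range.1 hk)))
      (hu (k+1) (by have := Finset.mem_range.1 hk; omega)).1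
  have h4 : ∑ k ∈ Finset.range n, (γ k - γ (k+1)) * M = (γ 0 - γ n) * M := by
    rw [← Finset.sum_mul, htel]
  rw [abs_le]
  constructor <;> nlinarith [h3.trans_eq h4]

lemma aux_abel_abs (γ u : ℕ → ℝ) (n : ℕ)
    (hγnn : ∀ k ≤ n, 0 ≤ γ k) (hstep : ∀ k < n, γ (k+1) ≤ γ k) :
    |∑ k ∈ Finset.range (n+1), γ k * (u (k+1) - u k)|
      ≤ γ n * |u (n+1)| + γ 0 * |u 0| + ∑ k ∈ Finset.range n, (γ k - γ (k+1)) * |u (k+1)| := by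
  rw [aux_abel]
  calc |γ n * u (n+1) - γ 0 * u 0 + ∑ k ∈ Finset.range n, (γ k - γ (k+1)) * u (k+1)|
      ≤ |γ n * u (n+1) - γ 0 * u 0| + |∑ k ∈ Finset.range n, (γ k - γ (k+1)) * u (k+1)| :=
        abs_add_le _ _
    _ ≤ (|γ n * u (n+1)| + |γ 0 * u 0|) + ∑ k ∈ Finset.range n, |(γ k - γ (k+1)) * u (k+1)| :=
        add_le_add (abs_sub _ _) (Finset.abs_sum_le_sum_abs _ _)
    _ ≤ γ n * |u (n+1)| + γ 0 * |u 0| + ∑ k ∈ Finset.range n, (γ k - γ (k+1)) * |u (k+1)| := by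
        have e1 : |γ n * u (n+1)| = γ n * |u (n+1)| := by
          rw [abs_mul, abs_of_nonneg (hγnn n le_rfl)]
        have e2 : |γ 0 * u 0| = γ 0 * |u 0| := by
          rw [abs_mul, abs_of_nonneg (hγnn 0 (Nat.zero_le n))]
        have e3 : ∀ k ∈ Finset.range n, |(γ k - γ (k+1)) * u (k+1)|
            = (γ k - γ (k+1)) * |u (k+1)| := fun k hk => by
          rw [abs_mul, abs_of_nonneg (sub_nonneg.2 (hstep k (Finset.mem_range.1 hk)))]
        rw [e1, e2, Finset.sum_congr rfl e3]

lemma aux_cancel (x a b : ℝ) (ha : 0 ≤ a * x) (hb : 0 ≤ b * x) (hab : |a| + |b| ≤ |x|) :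
    |x - a - b| = |x| - |a| - |b| := by
  rcases lt_trichotomy x 0 with h | h | h
  · have hA : a ≤ 0 := by nlinarith
    have hB : b ≤ 0 := by nlinarith
    rw [abs_of_neg h, abs_of_nonpos hA, abs_of_nonpos hB] at hab ⊢
    rw [abs_of_nonpos (by linarith)]
    ring
  · subst h
    simp only [abs_zero] at hab ⊢
    have := abs_nonneg a; have := abs_nonneg b
    have ha0 : |a| = 0 := by linarith
    have hb0 : |b| = 0 := by linarith
    rw [abs_eq_zero.1 ha0, abs_eq_zero.1 hb0]
    simp
  · have hA : 0 ≤ a := by nlinarith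
    have hB : 0 ≤ b := by nlinarith
    rw [abs_of_pos h, abs_of_nonneg hA, abs_of_nonneg hB] at hab ⊢
    rw [abs_of_nonneg (by linarith)]

lemma aux_lip (f f' : ℝ → ℝ) (A B K : ℝ)
    (hf : ∀ x ∈ Set.Icc A B, HasDerivWithinAt f (f' x) (Set.Icc A B) x)
    (hK : ∀ x ∈ Set.Icc A B, |f' x| ≤ K)
    {x y : ℝ} (hx : x ∈ Set.Icc A B) (hy : y ∈ Set.Icc A B) :
    |f y - f x| ≤ K * |y - x| := by
  have := Convex.norm_image_sub_le_of_norm_hasDerivWithin_le hf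
    (fun t ht => by rw [Real.norm_eq_abs]; exact hK t ht) (convex_Icc A B) hx hy
  simpa [Real.norm_eq_abs] using this

lemma aux_taylor (f f' f'' : ℝ → ℝ) (A B K : ℝ)
    (hf : ∀ x ∈ Set.Icc A B, HasDerivWithinAt f (f' x) (Set.Icc A B) x)
    (hf' : ∀ x ∈ Set.Icc A B, HasDerivWithinAt f' (f'' x) (Set.Icc A B) x)
    (hK : ∀ x ∈ Set.Icc A B, |f'' x| ≤ K)
    {x y : ℝ} (hx : x ∈ Set.Icc A B) (hy : y ∈ Set.Icc A B) :
    |f y - f x - f' x * (y - x)| ≤ K * |y - x| * |y - x| := by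
  have hKnn : 0 ≤ K := le_trans (abs_nonneg _) (hK x hx)
  set s : Set ℝ := Set.Icc (min x y) (max x y) with hs
  have hsub : s ⊆ Set.Icc A B := Set.Icc_subset_Icc (le_min hx.1 hy.1) (max_le hx.2 hy.2)
  have hxs : x ∈ s := ⟨min_le_left _ _, le_max_left _ _⟩
  have hys : y ∈ s := ⟨min_le_right _ _, le_max_right _ _⟩
  have hder : ∀ t ∈ s, HasDerivWithinAt (fun t => f t - f' x * t) (f' t - f' x) s t := by
    intro t ht
    exact ((hf t (hsub ht)).mono hsub).sub
      (by simpa using (hasDerivWithinAt_id t s).const_mul (f' x))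
  have hbound : ∀ t ∈ s, ‖f' t - f' x‖ ≤ K * |y - x| := by
    intro t ht
    have h1 : |f' t - f' x| ≤ K * |t - x| := aux_lip f' f'' A B K hf' hK hx (hsub ht)
    have h2 : |t - x| ≤ |y - x| := by
      rcases le_total x y with h | h
      · rw [hs, min_eq_left h, max_eq_right h] at ht
        rw [abs_of_nonneg (by linarith [ht.1] : (0:ℝ) ≤ t - x),
          abs_of_nonneg (sub_nonneg.2 h)]
        linarith [ht.2]
      · rw [hs, min_eq_right h, max_eq_left h] at ht
        rw [abs_of_nonpos (by linarith [ht.2] : t - x ≤ 0),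
          abs_of_nonpos (sub_nonpos.2 h)]
        linarith [ht.1]
    rw [Real.norm_eq_abs]
    exact h1.trans (mul_le_mul_of_nonneg_left h2 hKnn)
  have := Convex.norm_image_sub_le_of_norm_hasDerivWithin_le hder hbound
    (convex_Icc _ _) hxs hys
  rw [Real.norm_eq_abs, Real.norm_eq_abs] at this
  calc |f y - f x - f' x * (y - x)| = |(f y - f' x * y) - (f x - f' x * x)| := by ring_nf
    _ ≤ K * |y - x| * |y - x| := this

lemma aux_key (lam : ℝ) (G : ℝ → ℝ → ℝ) (g v : ℝ → ℝ) (γ : ℕ → ℝ) (N : ℕ) (ρ : ℤ → ℝ)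
    (j : ℤ) :
    schemeS lam G v γ N ρ (j+1) - schemeS lam G v γ N ρ j =
      (auxD ρ j - auxa lam G g v γ N ρ j - auxb lam G g v γ N ρ j)
        + auxa lam G g v γ N ρ (j-1) + auxb lam G g v γ N ρ (j+1)
        - lam * auxW g v γ N ρ j := by
  simp only [schemeS, auxD, auxa, auxb, auxW, Vj_eq]
  rw [show j+1-1 = j from by ring, show j-1+1 = j from by ring]
  ring

lemma aux_sdiff (ρ : ℤ → ℝ) (γ : ℕ → ℝ) (N : ℕ) (j : ℤ) :
    auxS ρ γ N (j+1) - auxS ρ γ N j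
      = ∑ k ∈ Finset.range N, γ k * auxD ρ (j + ((k:ℤ) + 1)) := by
  rw [auxS, auxS, ← Finset.sum_sub_distrib]
  refine Finset.sum_congr rfl fun k _ => ?_
  simp only [auxD]
  rw [show j + ((k:ℤ)+1) + 1 = j + 1 + (k:ℤ) + 1 from by ring,
    show j + ((k:ℤ)+1) = j + (k:ℤ) + 1 from by ring]
  ring

lemma aux_sdiff_u (ρ : ℤ → ℝ) (γ : ℕ → ℝ) (N : ℕ) (j : ℤ) :
    auxS ρ γ N (j+1) - auxS ρ γ N j
      = ∑ k ∈ Finset.range N, γ k * ((fun k : ℕ => ρ (j + (k:ℤ) + 1)) (k+1)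
          - (fun k : ℕ => ρ (j + (k:ℤ) + 1)) k) := by
  rw [aux_sdiff]
  refine Finset.sum_congr rfl fun k _ => ?_
  simp only [auxD]
  rw [show j + ((k:ℤ)+1) + 1 = j + ((k+1:ℕ):ℤ) + 1 from by push_cast; ring,
    show j + ((k:ℤ)+1) = j + (k:ℤ) + 1 from by ring]

lemma aux_sdd_u (ρ : ℤ → ℝ) (γ : ℕ → ℝ) (N : ℕ) (j : ℤ) :
    auxS ρ γ N (j+1) - 2 * auxS ρ γ N j + auxS ρ γ N (j-1)
      = ∑ k ∈ Finset.range N, γ k * ((fun k : ℕ => auxD ρ (j + (k:ℤ))) (k+1)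
          - (fun k : ℕ => auxD ρ (j + (k:ℤ))) k) := by
  simp only [auxS, auxD, Finset.mul_sum]
  rw [← Finset.sum_sub_distrib, ← Finset.sum_add_distrib]
  refine Finset.sum_congr rfl fun k _ => ?_
  rw [show j + 1 + (k:ℤ) + 1 = j + ((k+1:ℕ):ℤ) + 1 from by push_cast; ring,
    show j - 1 + (k:ℤ) + 1 = j + (k:ℤ) from by ring,
    show j + ((k+1:ℕ):ℤ) = j + (k:ℤ) + 1 from by push_cast; ring]
  ring

set_option maxHeartbeats 2000000 in
theorem stmt6
    (ρmin ρmax Δx Δt : ℝ)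
    (hρmin : 0 ≤ ρmin) (hI : ρmin ≤ ρmax) (hΔx : 0 < Δx) (hΔt : 0 < Δt)
    (N : ℕ) (hN : 1 ≤ N)
    (γ : ℕ → ℝ) (hγnn : ∀ k < N, 0 ≤ γ k)
    (hγmono : ∀ k : ℕ, 1 ≤ k → k ≤ N - 1 → γ k ≤ γ (k - 1))
    (hγsum : ∑ k ∈ Finset.range N, γ k ≤ 1)
    (v v' : ℝ → ℝ)
    (hv : ∀ x ∈ Icc (0 : ℝ) ρmax, HasDerivWithinAt v (v' x) (Icc (0 : ℝ) ρmax) x)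
    (hv'cont : ContinuousOn v' (Icc (0 : ℝ) ρmax))
    (hvnn : ∀ x ∈ Icc (0 : ℝ) ρmax, 0 ≤ v x)
    (hv'np : ∀ x ∈ Icc (0 : ℝ) ρmax, v' x ≤ 0)
    (g g' : ℝ → ℝ)
    (hg : ∀ x ∈ Icc ρmin ρmax, HasDerivWithinAt g (g' x) (Icc ρmin ρmax) x)
    (hg'cont : ContinuousOn g' (Icc ρmin ρmax))
    (G : ℝ → ℝ → ℝ)
    (hGcons : ∀ r ∈ Icc ρmin ρmax, G r r = g r)
    (hGmono1 : ∀ b ∈ Icc ρmin ρmax, MonotoneOn (fun a => G a b) (Icc ρmin ρmax))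
    (hGmono2 : ∀ a ∈ Icc ρmin ρmax, AntitoneOn (fun b => G a b) (Icc ρmin ρmax))
    (L1 L2 : ℝ) (hL1 : 0 < L1) (hL2 : 0 < L2)
    (hLip1 : ∀ a ∈ Icc ρmin ρmax, ∀ b ∈ Icc ρmin ρmax,
      supIm v (Icc (0 : ℝ) ρmax) * |G a b - G b b| ≤ L1 * |a - b|)
    (hLip2 : ∀ a ∈ Icc ρmin ρmax, ∀ b ∈ Icc ρmin ρmax,
      supIm v (Icc (0 : ℝ) ρmax) * |G a b - G a a| ≤ L2 * |a - b|)
    (v'' : ℝ → ℝ)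
    (hv' : ∀ x ∈ Icc (0 : ℝ) ρmax, HasDerivWithinAt v' (v'' x) (Icc (0 : ℝ) ρmax) x)
    (hv''cont : ContinuousOn v'' (Icc (0 : ℝ) ρmax))
    (ω0 : ℝ) (hω0 : 0 < ω0) (hγ0ω : γ 0 ≤ Δx * ω0)
    (hCFL : (Δt / Δx) * (supIm2 G (Icc ρmin ρmax) *
      supIm (fun x => |v' x|) (Icc (0 : ℝ) ρmax) * γ 0 + L1 + L2) ≤ 1)
    (ρ : ℤ → ℝ) (hρ : ∀ j, ρ j ∈ Icc ρmin ρmax)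
    (hρdiff : Summable fun j : ℤ => |ρ (j + 1) - ρ j|) :
    (Summable fun j : ℤ =>
      |schemeS (Δt / Δx) G v γ N ρ (j + 1) - schemeS (Δt / Δx) G v γ N ρ j|) ∧
    ∑' j : ℤ, |schemeS (Δt / Δx) G v γ N ρ (j + 1) - schemeS (Δt / Δx) G v γ N ρ j| ≤
      (1 + Δt * ω0 *
        (supIm (fun x => |v' x|) (Icc (0 : ℝ) ρmax) *
            (2 * supIm (fun x => |g x|) (Icc ρmin ρmax) +
              supIm (fun x => |g' x|) (Icc ρmin ρmax) * ρmax) +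
          2 * supIm (fun x => |v'' x|) (Icc (0 : ℝ) ρmax) *
            supIm (fun x => |g x|) (Icc ρmin ρmax) * ρmax)) *
        ∑' j : ℤ, |ρ (j + 1) - ρ j| := by
  have hρmax0 : (0:ℝ) ≤ ρmax := le_trans hρmin hI
  obtain ⟨n, rfl⟩ : ∃ n, N = n + 1 := ⟨N - 1, by omega⟩
  set lam := Δt / Δx with hlam_def
  have hlam : 0 < lam := div_pos hΔt hΔx
  set Kv := supIm (fun x => |v' x|) (Icc (0 : ℝ) ρmax) with hKv_def
  set Kg := supIm (fun x => |g x|) (Icc ρmin ρmax) with hKg_def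
  set Kg' := supIm (fun x => |g' x|) (Icc ρmin ρmax) with hKg'_def
  set Kv2 := supIm (fun x => |v'' x|) (Icc (0 : ℝ) ρmax) with hKv2_def
  set KG := supIm2 G (Icc ρmin ρmax) with hKG_def
  set Kv0 := supIm v (Icc (0 : ℝ) ρmax) with hKv0_def
  have hsup_le : ∀ (f : ℝ → ℝ) (A B : ℝ), ContinuousOn f (Set.Icc A B) →
      ∀ x ∈ Set.Icc A B, f x ≤ supIm f (Set.Icc A B) := by
    intro f A B hf x hx
    rw [supIm]
    exact le_csSup ((isCompact_Icc.image_of_continuousOn hf).bddAbove) ⟨x, hx, rfl⟩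
  have hvcont : ContinuousOn v (Icc (0:ℝ) ρmax) := fun x hx => (hv x hx).continuousWithinAt
  have hgcont : ContinuousOn g (Icc ρmin ρmax) := fun x hx => (hg x hx).continuousWithinAt
  have hmem0 : (0:ℝ) ∈ Icc (0:ℝ) ρmax := ⟨le_rfl, hρmax0⟩
  have hmemI : ρmin ∈ Icc ρmin ρmax := ⟨le_rfl, hI⟩
  have hmemI' : ρmax ∈ Icc ρmin ρmax := ⟨hI, le_rfl⟩
  have hKvle : ∀ x ∈ Icc (0:ℝ) ρmax, |v' x| ≤ Kv := hsup_le _ _ _ hv'cont.abs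
  have hKvnn : 0 ≤ Kv := le_trans (abs_nonneg _) (hKvle 0 hmem0)
  have hKgle : ∀ x ∈ Icc ρmin ρmax, |g x| ≤ Kg := hsup_le _ _ _ hgcont.abs
  have hKgnn : 0 ≤ Kg := le_trans (abs_nonneg _) (hKgle ρmin hmemI)
  have hKg'le : ∀ x ∈ Icc ρmin ρmax, |g' x| ≤ Kg' := hsup_le _ _ _ hg'cont.abs
  have hKg'nn : 0 ≤ Kg' := le_trans (abs_nonneg _) (hKg'le ρmin hmemI)
  have hKv2le : ∀ x ∈ Icc (0:ℝ) ρmax, |v'' x| ≤ Kv2 := hsup_le _ _ _ hv''cont.abs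
  have hKv2nn : 0 ≤ Kv2 := le_trans (abs_nonneg _) (hKv2le 0 hmem0)
  have hKv0le : ∀ x ∈ Icc (0:ℝ) ρmax, v x ≤ Kv0 := hsup_le _ _ _ hvcont
  have hKGnn : 0 ≤ KG := by
    have hbdd : BddAbove ((fun p : ℝ × ℝ => |G p.1 p.2|)
        '' (Icc ρmin ρmax ×ˢ Icc ρmin ρmax)) := by
      refine ⟨max (G ρmax ρmin) (-(G ρmin ρmax)), ?_⟩
      rintro y ⟨⟨A, B⟩, hAB, rfl⟩
      obtain ⟨hA, hB⟩ := Set.mem_prod.1 hAB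
      have hub : G A B ≤ G ρmax ρmin := by
        calc G A B ≤ G ρmax B := hGmono1 B hB hA hmemI' hA.2
          _ ≤ G ρmax ρmin := hGmono2 ρmax hmemI' hmemI hB hB.1
      have hlb : G ρmin ρmax ≤ G A B := by
        calc G ρmin ρmax ≤ G ρmin B := hGmono2 ρmin hmemI hB hmemI' hB.2
          _ ≤ G A B := hGmono1 B hB hmemI hA hA.1
      have := le_max_left (G ρmax ρmin) (-(G ρmin ρmax))
      have := le_max_right (G ρmax ρmin) (-(G ρmin ρmax))
      rw [abs_le]
      constructor <;> simp only [] <;> linarith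
    rw [hKG_def, supIm2]
    exact le_trans (abs_nonneg (G ρmin ρmin))
      (le_csSup hbdd ⟨(ρmin, ρmin), Set.mem_prod.2 ⟨hmemI, hmemI⟩, rfl⟩)
  have hγ0nn : 0 ≤ γ 0 := hγnn 0 (by omega)
  have hCFL' : lam * (L1 + L2) ≤ 1 := by
    nlinarith [mul_nonneg hlam.le (mul_nonneg (mul_nonneg hKGnn hKvnn) hγ0nn)]
  have hγk : ∀ k ≤ n, 0 ≤ γ k := fun k hk => hγnn k (by omega)
  have hγstep : ∀ k < n, γ (k+1) ≤ γ k := by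
    intro k hk
    have := hγmono (k+1) (by omega) (by omega)
    simpa using this
  have hρ0 : ∀ j, 0 ≤ ρ j := fun j => le_trans hρmin (hρ j).1
  have hρM : ∀ j, ρ j ≤ ρmax := fun j => (hρ j).2
  have hsmem : ∀ j, auxS ρ γ (n+1) j ∈ Icc (0:ℝ) ρmax := by
    intro j
    constructor
    · exact Finset.sum_nonneg fun k hk =>
        mul_nonneg (hγnn k (Finset.mem_range.1 hk)) (hρ0 _)
    · calc auxS ρ γ (n+1) j ≤ ∑ k ∈ Finset.range (n+1), γ k * ρmax :=
          Finset.sum_le_sum fun k hk =>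
            mul_le_mul_of_nonneg_left (hρM _) (hγnn k (Finset.mem_range.1 hk))
        _ = (∑ k ∈ Finset.range (n+1), γ k) * ρmax := by rw [Finset.sum_mul]
        _ ≤ 1 * ρmax := mul_le_mul_of_nonneg_right hγsum hρmax0
        _ = ρmax := one_mul _
  have hVnn : ∀ j, 0 ≤ v (auxS ρ γ (n+1) j) := fun j => hvnn _ (hsmem j)
  have hVle : ∀ j, v (auxS ρ γ (n+1) j) ≤ Kv0 := fun j => hKv0le _ (hsmem j)
  -- sign facts
  have hax : ∀ j, 0 ≤ auxa lam G g v γ (n+1) ρ j * auxD ρ j := by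
    intro j
    rcases le_total (ρ j) (ρ (j+1)) with hc | hc
    · have hQ : G (ρ j) (ρ (j+1)) ≤ g (ρ (j+1)) := by
        rw [← hGcons (ρ (j+1)) (hρ (j+1))]
        exact hGmono1 (ρ (j+1)) (hρ (j+1)) (hρ j) (hρ (j+1)) hc
      have hD : 0 ≤ auxD ρ j := sub_nonneg.2 hc
      exact mul_nonneg (mul_nonneg hlam.le
        (mul_nonneg (sub_nonneg.2 hQ) (hVnn j))) hD
    · have hQ : g (ρ (j+1)) ≤ G (ρ j) (ρ (j+1)) := by
        rw [← hGcons (ρ (j+1)) (hρ (j+1))]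
        exact hGmono1 (ρ (j+1)) (hρ (j+1)) (hρ (j+1)) (hρ j) hc
      have hD : auxD ρ j ≤ 0 := sub_nonpos.2 hc
      have ha' : auxa lam G g v γ (n+1) ρ j ≤ 0 :=
        mul_nonpos_of_nonneg_of_nonpos hlam.le
          (mul_nonpos_of_nonpos_of_nonneg (sub_nonpos.2 hQ) (hVnn j))
      nlinarith [mul_nonneg (neg_nonneg.2 ha') (neg_nonneg.2 hD)]
  have hbx : ∀ j, 0 ≤ auxb lam G g v γ (n+1) ρ j * auxD ρ j := by
    intro j
    rcases le_total (ρ j) (ρ (j+1)) with hc | hc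
    · have hP : G (ρ j) (ρ (j+1)) ≤ g (ρ j) := by
        rw [← hGcons (ρ j) (hρ j)]
        exact hGmono2 (ρ j) (hρ j) (hρ j) (hρ (j+1)) hc
      have hD : 0 ≤ auxD ρ j := sub_nonneg.2 hc
      exact mul_nonneg (mul_nonneg hlam.le
        (mul_nonneg (sub_nonneg.2 hP) (hVnn j))) hD
    · have hP : g (ρ j) ≤ G (ρ j) (ρ (j+1)) := by
        rw [← hGcons (ρ j) (hρ j)]
        exact hGmono2 (ρ j) (hρ j) (hρ (j+1)) (hρ j) hc
      have hD : auxD ρ j ≤ 0 := sub_nonpos.2 hc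
      have hb' : auxb lam G g v γ (n+1) ρ j ≤ 0 :=
        mul_nonpos_of_nonneg_of_nonpos hlam.le
          (mul_nonpos_of_nonpos_of_nonneg (sub_nonpos.2 hP) (hVnn j))
      nlinarith [mul_nonneg (neg_nonneg.2 hb') (neg_nonneg.2 hD)]
  -- size bounds
  have haabs : ∀ j, |auxa lam G g v γ (n+1) ρ j| ≤ lam * L1 * |auxD ρ j| := by
    intro j
    have hlip := hLip1 (ρ j) (hρ j) (ρ (j+1)) (hρ (j+1))
    rw [hGcons (ρ (j+1)) (hρ (j+1))] at hlip
    have step : |g (ρ (j+1)) - G (ρ j) (ρ (j+1))| * |v (auxS ρ γ (n+1) j)|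
        ≤ L1 * |auxD ρ j| := by
      rw [abs_sub_comm, abs_of_nonneg (hVnn j)]
      calc |G (ρ j) (ρ (j+1)) - g (ρ (j+1))| * v (auxS ρ γ (n+1) j)
          ≤ |G (ρ j) (ρ (j+1)) - g (ρ (j+1))| * Kv0 :=
            mul_le_mul_of_nonneg_left (hVle j) (abs_nonneg _)
        _ = Kv0 * |G (ρ j) (ρ (j+1)) - g (ρ (j+1))| := mul_comm _ _
        _ ≤ L1 * |ρ j - ρ (j+1)| := hlip
        _ = L1 * |auxD ρ j| := by rw [show |ρ j - ρ (j+1)| = |auxD ρ j| from by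
              simp only [auxD]; rw [abs_sub_comm]]
    calc |auxa lam G g v γ (n+1) ρ j|
        = lam * (|g (ρ (j+1)) - G (ρ j) (ρ (j+1))| * |v (auxS ρ γ (n+1) j)|) := by
          rw [auxa, abs_mul, abs_mul, abs_of_pos hlam]
      _ ≤ lam * (L1 * |auxD ρ j|) := mul_le_mul_of_nonneg_left step hlam.le
      _ = lam * L1 * |auxD ρ j| := by ring
  have hbabs : ∀ j, |auxb lam G g v γ (n+1) ρ j| ≤ lam * L2 * |auxD ρ j| := by
    intro j
    have hlip := hLip2 (ρ j) (hρ j) (ρ (j+1)) (hρ (j+1))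
    rw [hGcons (ρ j) (hρ j)] at hlip
    have step : |g (ρ j) - G (ρ j) (ρ (j+1))| * |v (auxS ρ γ (n+1) j)|
        ≤ L2 * |auxD ρ j| := by
      rw [abs_sub_comm, abs_of_nonneg (hVnn j)]
      calc |G (ρ j) (ρ (j+1)) - g (ρ j)| * v (auxS ρ γ (n+1) j)
          ≤ |G (ρ j) (ρ (j+1)) - g (ρ j)| * Kv0 :=
            mul_le_mul_of_nonneg_left (hVle j) (abs_nonneg _)
        _ = Kv0 * |G (ρ j) (ρ (j+1)) - g (ρ j)| := mul_comm _ _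
        _ ≤ L2 * |ρ j - ρ (j+1)| := hlip
        _ = L2 * |auxD ρ j| := by rw [show |ρ j - ρ (j+1)| = |auxD ρ j| from by
              simp only [auxD]; rw [abs_sub_comm]]
    calc |auxb lam G g v γ (n+1) ρ j|
        = lam * (|g (ρ j) - G (ρ j) (ρ (j+1))| * |v (auxS ρ γ (n+1) j)|) := by
          rw [auxb, abs_mul, abs_mul, abs_of_pos hlam]
      _ ≤ lam * (L2 * |auxD ρ j|) := mul_le_mul_of_nonneg_left step hlam.le
      _ = lam * L2 * |auxD ρ j| := by ring
  -- Lipschitz and Taylor instances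
  have hglipI : ∀ x y : ℝ, x ∈ Icc ρmin ρmax → y ∈ Icc ρmin ρmax →
      |g y - g x| ≤ Kg' * |y - x| := fun x y hx hy =>
    aux_lip g g' ρmin ρmax Kg' hg hKg'le hx hy
  have hvlipJ : ∀ x y : ℝ, x ∈ Icc (0:ℝ) ρmax → y ∈ Icc (0:ℝ) ρmax →
      |v y - v x| ≤ Kv * |y - x| := fun x y hx hy =>
    aux_lip v v' 0 ρmax Kv hv hKvle hx hy
  have htay : ∀ x y : ℝ, x ∈ Icc (0:ℝ) ρmax → y ∈ Icc (0:ℝ) ρmax →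
      |v y - v x - v' x * (y - x)| ≤ Kv2 * |y - x| * |y - x| := fun x y hx hy =>
    aux_taylor v v' v'' 0 ρmax Kv2 hv hv' hKv2le hx hy
  -- s-difference bounds
  have hsd : ∀ j, |auxS ρ γ (n+1) (j+1) - auxS ρ γ (n+1) j| ≤ γ 0 * ρmax := by
    intro j
    rw [aux_sdiff_u]
    exact aux_abel_bound γ (fun k : ℕ => ρ (j + (k:ℤ) + 1)) n ρmax hγk hγstep
      (fun k _ => ⟨hρ0 _, hρM _⟩)
  have hsdR' : ∀ j, |auxS ρ γ (n+1) (j+1) - auxS ρ γ (n+1) j| ≤ auxR' γ (n+1) ρ j := by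
    intro j
    rw [aux_sdiff]
    refine le_trans (Finset.abs_sum_le_sum_abs _ _) ?_
    rw [auxR']
    refine le_of_eq (Finset.sum_congr rfl fun k hk => ?_)
    rw [abs_mul, abs_of_nonneg (hγnn k (Finset.mem_range.1 hk))]
  have hsdd : ∀ j, |auxS ρ γ (n+1) (j+1) - 2 * auxS ρ γ (n+1) j + auxS ρ γ (n+1) (j-1)|
      ≤ auxR γ n ρ j := by
    intro j
    rw [aux_sdd_u]
    refine le_trans (aux_abel_abs γ (fun k : ℕ => auxD ρ (j + (k:ℤ))) n hγk hγstep) ?_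
    simp only [auxR]
    push_cast [add_zero]
    exact le_rfl
  -- bound on the nonlocal remainder W
  have hWb : ∀ j, |auxW g v γ (n+1) ρ j| ≤
      Kg' * (Kv * (γ 0 * ρmax)) * |auxD ρ j| + Kg * (Kv * auxR γ n ρ j)
        + Kg * (Kv2 * (γ 0 * ρmax)) * (auxR' γ (n+1) ρ j + auxR' γ (n+1) ρ (j-1)) := by
    intro j
    have hid : auxW g v γ (n+1) ρ j
        = (g (ρ (j+1)) - g (ρ j)) * (v (auxS ρ γ (n+1) (j+1)) - v (auxS ρ γ (n+1) j))
          + g (ρ j) * (v' (auxS ρ γ (n+1) j) *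
              (auxS ρ γ (n+1) (j+1) - 2 * auxS ρ γ (n+1) j + auxS ρ γ (n+1) (j-1)))
          + g (ρ j) * ((v (auxS ρ γ (n+1) (j+1)) - v (auxS ρ γ (n+1) j)
                - v' (auxS ρ γ (n+1) j) * (auxS ρ γ (n+1) (j+1) - auxS ρ γ (n+1) j))
              + (v (auxS ρ γ (n+1) (j-1)) - v (auxS ρ γ (n+1) j)
                - v' (auxS ρ γ (n+1) j) * (auxS ρ γ (n+1) (j-1) - auxS ρ γ (n+1) j))) := by
      simp only [auxW]; ring
    rw [hid]
    have hT1 : |(g (ρ (j+1)) - g (ρ j)) * (v (auxS ρ γ (n+1) (j+1)) - v (auxS ρ γ (n+1) j))|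
        ≤ Kg' * (Kv * (γ 0 * ρmax)) * |auxD ρ j| := by
      rw [abs_mul]
      have h1 : |g (ρ (j+1)) - g (ρ j)| ≤ Kg' * |auxD ρ j| := by
        have := hglipI (ρ j) (ρ (j+1)) (hρ j) (hρ (j+1))
        simpa [auxD] using this
      have h2 : |v (auxS ρ γ (n+1) (j+1)) - v (auxS ρ γ (n+1) j)| ≤ Kv * (γ 0 * ρmax) := by
        refine le_trans (hvlipJ (auxS ρ γ (n+1) j) (auxS ρ γ (n+1) (j+1))
          (hsmem j) (hsmem (j+1))) ?_
        exact mul_le_mul_of_nonneg_left (hsd j) hKvnn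
      calc |g (ρ (j+1)) - g (ρ j)| * |v (auxS ρ γ (n+1) (j+1)) - v (auxS ρ γ (n+1) j)|
          ≤ (Kg' * |auxD ρ j|) * (Kv * (γ 0 * ρmax)) :=
            mul_le_mul h1 h2 (abs_nonneg _) (mul_nonneg hKg'nn (abs_nonneg _))
        _ = Kg' * (Kv * (γ 0 * ρmax)) * |auxD ρ j| := by ring
    have hT2 : |g (ρ j) * (v' (auxS ρ γ (n+1) j) *
          (auxS ρ γ (n+1) (j+1) - 2 * auxS ρ γ (n+1) j + auxS ρ γ (n+1) (j-1)))|
        ≤ Kg * (Kv * auxR γ n ρ j) := by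
      rw [abs_mul, abs_mul]
      have hRnn : (0:ℝ) ≤ auxR γ n ρ j := le_trans (abs_nonneg _) (hsdd j)
      exact mul_le_mul (hKgle _ (hρ j))
        (mul_le_mul (hKvle _ (hsmem j)) (hsdd j) (abs_nonneg _) hKvnn)
        (mul_nonneg (abs_nonneg _) (abs_nonneg _)) hKgnn
    have hE1 : |v (auxS ρ γ (n+1) (j+1)) - v (auxS ρ γ (n+1) j)
          - v' (auxS ρ γ (n+1) j) * (auxS ρ γ (n+1) (j+1) - auxS ρ γ (n+1) j)|
        ≤ Kv2 * (γ 0 * ρmax) * auxR' γ (n+1) ρ j := by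
      refine le_trans (htay (auxS ρ γ (n+1) j) (auxS ρ γ (n+1) (j+1))
        (hsmem j) (hsmem (j+1))) ?_
      have h1 : Kv2 * |auxS ρ γ (n+1) (j+1) - auxS ρ γ (n+1) j| ≤ Kv2 * (γ 0 * ρmax) :=
        mul_le_mul_of_nonneg_left (hsd j) hKv2nn
      exact mul_le_mul h1 (hsdR' j) (abs_nonneg _)
        (mul_nonneg hKv2nn (mul_nonneg hγ0nn hρmax0))
    have hE2 : |v (auxS ρ γ (n+1) (j-1)) - v (auxS ρ γ (n+1) j)
          - v' (auxS ρ γ (n+1) j) * (auxS ρ γ (n+1) (j-1) - auxS ρ γ (n+1) j)|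
        ≤ Kv2 * (γ 0 * ρmax) * auxR' γ (n+1) ρ (j-1) := by
      refine le_trans (htay (auxS ρ γ (n+1) j) (auxS ρ γ (n+1) (j-1))
        (hsmem j) (hsmem (j-1))) ?_
      have e : |auxS ρ γ (n+1) (j-1) - auxS ρ γ (n+1) j|
          = |auxS ρ γ (n+1) (j-1+1) - auxS ρ γ (n+1) (j-1)| := by
        rw [show j - 1 + 1 = j from by ring, abs_sub_comm]
      have h1 : Kv2 * |auxS ρ γ (n+1) (j-1) - auxS ρ γ (n+1) j| ≤ Kv2 * (γ 0 * ρmax) := by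
        rw [e]; exact mul_le_mul_of_nonneg_left (hsd (j-1)) hKv2nn
      have h2 : |auxS ρ γ (n+1) (j-1) - auxS ρ γ (n+1) j| ≤ auxR' γ (n+1) ρ (j-1) := by
        rw [e]; exact hsdR' (j-1)
      exact mul_le_mul h1 h2 (abs_nonneg _)
        (mul_nonneg hKv2nn (mul_nonneg hγ0nn hρmax0))
    have hT3 : |g (ρ j) * ((v (auxS ρ γ (n+1) (j+1)) - v (auxS ρ γ (n+1) j)
            - v' (auxS ρ γ (n+1) j) * (auxS ρ γ (n+1) (j+1) - auxS ρ γ (n+1) j))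
          + (v (auxS ρ γ (n+1) (j-1)) - v (auxS ρ γ (n+1) j)
            - v' (auxS ρ γ (n+1) j) * (auxS ρ γ (n+1) (j-1) - auxS ρ γ (n+1) j)))|
        ≤ Kg * (Kv2 * (γ 0 * ρmax)) * (auxR' γ (n+1) ρ j + auxR' γ (n+1) ρ (j-1)) := by
      rw [abs_mul]
      have hsum : |(v (auxS ρ γ (n+1) (j+1)) - v (auxS ρ γ (n+1) j)
            - v' (auxS ρ γ (n+1) j) * (auxS ρ γ (n+1) (j+1) - auxS ρ γ (n+1) j))
          + (v (auxS ρ γ (n+1) (j-1)) - v (auxS ρ γ (n+1) j)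
            - v' (auxS ρ γ (n+1) j) * (auxS ρ γ (n+1) (j-1) - auxS ρ γ (n+1) j))|
          ≤ Kv2 * (γ 0 * ρmax) * auxR' γ (n+1) ρ j
            + Kv2 * (γ 0 * ρmax) * auxR' γ (n+1) ρ (j-1) :=
        le_trans (abs_add_le _ _) (add_le_add hE1 hE2)
      calc |g (ρ j)| * |_ + _| ≤ Kg * (Kv2 * (γ 0 * ρmax) * auxR' γ (n+1) ρ j
            + Kv2 * (γ 0 * ρmax) * auxR' γ (n+1) ρ (j-1)) :=
            mul_le_mul (hKgle _ (hρ j)) hsum (abs_nonneg _) hKgnn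
        _ = Kg * (Kv2 * (γ 0 * ρmax)) * (auxR' γ (n+1) ρ j + auxR' γ (n+1) ρ (j-1)) := by
            ring
    have tri : ∀ X Y Z : ℝ, |X + Y + Z| ≤ |X| + |Y| + |Z| := fun X Y Z => by
      calc |X + Y + Z| ≤ |X + Y| + |Z| := abs_add_le _ _
        _ ≤ |X| + |Y| + |Z| := by linarith [abs_add_le X Y]
    exact le_trans (tri _ _ _) (by linarith [hT1, hT2, hT3])
  -- per-j main inequality
  have htri4 : ∀ X Y Z U : ℝ, |X + Y + Z - lam * U| ≤ |X| + |Y| + |Z| + lam * |U| := by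
    intro X Y Z U
    calc |X + Y + Z - lam * U| ≤ |X + Y + Z| + |lam * U| := abs_sub _ _
      _ ≤ (|X + Y| + |Z|) + |lam * U| := by linarith [abs_add_le (X+Y) Z]
      _ ≤ (|X| + |Y| + |Z|) + |lam * U| := by linarith [abs_add_le X Y]
      _ = |X| + |Y| + |Z| + lam * |U| := by rw [abs_mul, abs_of_pos hlam]
  have hmain : ∀ j : ℤ, |schemeS lam G v γ (n+1) ρ (j+1) - schemeS lam G v γ (n+1) ρ j|
      + |auxa lam G g v γ (n+1) ρ j| + |auxb lam G g v γ (n+1) ρ j|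
      ≤ |auxD ρ j| + |auxa lam G g v γ (n+1) ρ (j-1)| + |auxb lam G g v γ (n+1) ρ (j+1)|
        + lam * (Kg' * (Kv * (γ 0 * ρmax)) * |auxD ρ j| + Kg * (Kv * auxR γ n ρ j)
          + Kg * (Kv2 * (γ 0 * ρmax)) * (auxR' γ (n+1) ρ j + auxR' γ (n+1) ρ (j-1))) := by
    intro j
    have habs2 : |auxa lam G g v γ (n+1) ρ j| + |auxb lam G g v γ (n+1) ρ j|
        ≤ |auxD ρ j| := by
      nlinarith [haabs j, hbabs j,
        mul_le_mul_of_nonneg_right hCFL' (abs_nonneg (auxD ρ j))]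
    have hcanc := aux_cancel (auxD ρ j) (auxa lam G g v γ (n+1) ρ j)
      (auxb lam G g v γ (n+1) ρ j) (hax j) (hbx j) habs2
    have hW := mul_le_mul_of_nonneg_left (hWb j) hlam.le
    rw [aux_key lam G g v γ (n+1) ρ j]
    have h4 := htri4 (auxD ρ j - auxa lam G g v γ (n+1) ρ j - auxb lam G g v γ (n+1) ρ j)
      (auxa lam G g v γ (n+1) ρ (j-1)) (auxb lam G g v γ (n+1) ρ (j+1))
      (auxW g v γ (n+1) ρ j)
    rw [hcanc] at h4
    linarith [h4, hW]
  -- summability infrastructure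
  have hTVs : Summable fun j : ℤ => |auxD ρ j| := hρdiff.congr fun j => rfl
  have hshiftS : ∀ d : ℤ, Summable fun j : ℤ => |auxD ρ (j + d)| := fun d =>
    aux_sum_shift_summable hTVs d
  have hshiftT : ∀ d : ℤ, ∑' j : ℤ, |auxD ρ (j + d)| = ∑' j : ℤ, |auxD ρ j| := fun d =>
    aux_sum_shift_tsum (fun j => |auxD ρ j|) d
  have ha_s : Summable fun j : ℤ => |auxa lam G g v γ (n+1) ρ j| :=
    Summable.of_nonneg_of_le (fun j => abs_nonneg _) haabs (hTVs.mul_left (lam * L1))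
  have hb_s : Summable fun j : ℤ => |auxb lam G g v γ (n+1) ρ j| :=
    Summable.of_nonneg_of_le (fun j => abs_nonneg _) hbabs (hTVs.mul_left (lam * L2))
  have ha_s' : Summable fun j : ℤ => |auxa lam G g v γ (n+1) ρ (j - 1)| :=
    (aux_sum_shift_summable ha_s (-1)).congr
      (fun j => by rw [show j + (-1:ℤ) = j - 1 from by ring])
  have hb_s' : Summable fun j : ℤ => |auxb lam G g v γ (n+1) ρ (j + 1)| :=
    aux_sum_shift_summable hb_s 1
  have hRs : Summable (fun j : ℤ => auxR γ n ρ j) := by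
    simp only [auxR]
    exact (((hshiftS _).mul_left (γ n)).add (hTVs.mul_left (γ 0))).add
      (summable_sum fun k _ => (hshiftS _).mul_left _)
  have hR's : Summable (fun j : ℤ => auxR' γ (n+1) ρ j) := by
    simp only [auxR']
    exact summable_sum fun k _ => (hshiftS _).mul_left _
  have hR's_m : Summable fun j : ℤ => auxR' γ (n+1) ρ (j - 1) :=
    (aux_sum_shift_summable hR's (-1)).congr
      (fun j => by rw [show j + (-1:ℤ) = j - 1 from by ring])
  have h1s : Summable fun j : ℤ => Kg' * (Kv * (γ 0 * ρmax)) * |auxD ρ j| :=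
    hTVs.mul_left _
  have h2s : Summable fun j : ℤ => Kg * (Kv * auxR γ n ρ j) :=
    (hRs.mul_left Kv).mul_left Kg
  have h3s : Summable fun j : ℤ =>
      Kg * (Kv2 * (γ 0 * ρmax)) * (auxR' γ (n+1) ρ j + auxR' γ (n+1) ρ (j - 1)) :=
    (hR's.add hR's_m).mul_left _
  have hinner : Summable fun j : ℤ =>
      Kg' * (Kv * (γ 0 * ρmax)) * |auxD ρ j| + Kg * (Kv * auxR γ n ρ j)
        + Kg * (Kv2 * (γ 0 * ρmax)) * (auxR' γ (n+1) ρ j + auxR' γ (n+1) ρ (j - 1)) :=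
    (h1s.add h2s).add h3s
  have hΦs : Summable (fun j : ℤ => |auxD ρ j| + |auxa lam G g v γ (n+1) ρ (j-1)|
      + |auxb lam G g v γ (n+1) ρ (j+1)|
      + lam * (Kg' * (Kv * (γ 0 * ρmax)) * |auxD ρ j| + Kg * (Kv * auxR γ n ρ j)
        + Kg * (Kv2 * (γ 0 * ρmax)) * (auxR' γ (n+1) ρ j + auxR' γ (n+1) ρ (j-1)))) :=
    ((hTVs.add ha_s').add hb_s').add (hinner.mul_left lam)
  have hLHSs : Summable (fun j : ℤ =>
      |schemeS lam G v γ (n+1) ρ (j+1) - schemeS lam G v γ (n+1) ρ j|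
        + |auxa lam G g v γ (n+1) ρ j| + |auxb lam G g v γ (n+1) ρ j|) :=
    Summable.of_nonneg_of_le (fun j => by positivity) hmain hΦs
  have hDSs : Summable (fun j : ℤ =>
      |schemeS lam G v γ (n+1) ρ (j+1) - schemeS lam G v γ (n+1) ρ j|) :=
    Summable.of_nonneg_of_le (fun j => abs_nonneg _)
      (fun j => by
        linarith [abs_nonneg (auxa lam G g v γ (n+1) ρ j),
          abs_nonneg (auxb lam G g v γ (n+1) ρ j)]) hLHSs
  refine ⟨hDSs, ?_⟩
  have hTV_eq : ∑' j : ℤ, |ρ (j + 1) - ρ j| = ∑' j : ℤ, |auxD ρ j| :=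
    tsum_congr fun j => rfl
  rw [hTV_eq]
  -- tsum identities
  have hta : ∑' j : ℤ, |auxa lam G g v γ (n+1) ρ (j - 1)|
      = ∑' j : ℤ, |auxa lam G g v γ (n+1) ρ j| := by
    rw [← aux_sum_shift_tsum (fun j : ℤ => |auxa lam G g v γ (n+1) ρ j|) (-1)]
    exact tsum_congr fun j => by rw [show j - 1 = j + (-1:ℤ) from by ring]
  have htb : ∑' j : ℤ, |auxb lam G g v γ (n+1) ρ (j + 1)|
      = ∑' j : ℤ, |auxb lam G g v γ (n+1) ρ j| :=
    aux_sum_shift_tsum (fun j : ℤ => |auxb lam G g v γ (n+1) ρ j|) 1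
  have htR'm : ∑' j : ℤ, auxR' γ (n+1) ρ (j - 1) = ∑' j : ℤ, auxR' γ (n+1) ρ j := by
    rw [← aux_sum_shift_tsum (fun j : ℤ => auxR' γ (n+1) ρ j) (-1)]
    exact tsum_congr fun j => by rw [show j - 1 = j + (-1:ℤ) from by ring]
  have htR : ∑' j : ℤ, auxR γ n ρ j = 2 * γ 0 * ∑' j : ℤ, |auxD ρ j| := by
    simp only [auxR]
    rw [Summable.tsum_add (((hshiftS _).mul_left (γ n)).add (hTVs.mul_left (γ 0)))
        (summable_sum fun k _ => (hshiftS _).mul_left _),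
      Summable.tsum_add ((hshiftS _).mul_left (γ n)) (hTVs.mul_left (γ 0)),
      tsum_mul_left, tsum_mul_left, hshiftT,
      Summable.tsum_finsetSum (fun k _ => (hshiftS _).mul_left _)]
    have hcong : ∀ k ∈ Finset.range n, ∑' j : ℤ, (γ k - γ (k+1)) * |auxD ρ (j + ((k:ℤ)+1))|
        = (γ k - γ (k+1)) * ∑' j : ℤ, |auxD ρ j| := fun k _ => by
      rw [tsum_mul_left, hshiftT]
    rw [Finset.sum_congr rfl hcong, ← Finset.sum_mul, Finset.sum_range_sub' γ n]
    ring
  have htR'le : ∑' j : ℤ, auxR' γ (n+1) ρ j ≤ ∑' j : ℤ, |auxD ρ j| := by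
    simp only [auxR']
    rw [Summable.tsum_finsetSum (fun k _ => (hshiftS _).mul_left _)]
    have hcong : ∀ k ∈ Finset.range (n+1), ∑' j : ℤ, γ k * |auxD ρ (j + ((k:ℤ)+1))|
        = γ k * ∑' j : ℤ, |auxD ρ j| := fun k _ => by rw [tsum_mul_left, hshiftT]
    rw [Finset.sum_congr rfl hcong, ← Finset.sum_mul]
    calc (∑ k ∈ Finset.range (n+1), γ k) * ∑' j : ℤ, |auxD ρ j|
        ≤ 1 * ∑' j : ℤ, |auxD ρ j| :=
          mul_le_mul_of_nonneg_right hγsum (tsum_nonneg fun j => abs_nonneg _)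
      _ = ∑' j : ℤ, |auxD ρ j| := one_mul _
  have hR'nn : 0 ≤ ∑' j : ℤ, auxR' γ (n+1) ρ j :=
    tsum_nonneg fun j => by
      simp only [auxR']
      exact Finset.sum_nonneg fun k hk =>
        mul_nonneg (hγnn k (Finset.mem_range.1 hk)) (abs_nonneg _)
  -- main tsum inequality
  have hstep1 := Summable.tsum_le_tsum hmain hLHSs hΦs
  rw [Summable.tsum_add (hDSs.add ha_s) hb_s, Summable.tsum_add hDSs ha_s,
    Summable.tsum_add ((hTVs.add ha_s').add hb_s') (hinner.mul_left lam),
    Summable.tsum_add (hTVs.add ha_s') hb_s', Summable.tsum_add hTVs ha_s',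
    tsum_mul_left, Summable.tsum_add (h1s.add h2s) h3s, Summable.tsum_add h1s h2s,
    tsum_mul_left, tsum_mul_left, tsum_mul_left, tsum_mul_left,
    Summable.tsum_add hR's hR's_m, hta, htb, htR'm, htR] at hstep1
  -- final arithmetic
  have hTnn : 0 ≤ ∑' j : ℤ, |auxD ρ j| := tsum_nonneg fun j => abs_nonneg _
  have hlamγ0 : lam * γ 0 ≤ Δt * ω0 := by
    have h2 : lam * (Δx * ω0) = Δt * ω0 := by rw [hlam_def]; field_simp
    have h1 : lam * γ 0 ≤ lam * (Δx * ω0) := mul_le_mul_of_nonneg_left hγ0ω hlam.le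
    linarith
  set T := ∑' j : ℤ, |auxD ρ j| with hT_def
  set SR' := ∑' j : ℤ, auxR' γ (n+1) ρ j with hSR'_def
  have hBnn : 0 ≤ Kg' * Kv * ρmax + 2 * Kg * Kv + 2 * Kg * Kv2 * ρmax := by
    have := mul_nonneg (mul_nonneg hKg'nn hKvnn) hρmax0
    have := mul_nonneg hKgnn hKvnn
    have := mul_nonneg (mul_nonneg hKgnn hKv2nn) hρmax0
    linarith
  have hC3nn : 0 ≤ Kg * (Kv2 * (γ 0 * ρmax)) :=
    mul_nonneg hKgnn (mul_nonneg hKv2nn (mul_nonneg hγ0nn hρmax0))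
  have hkey2 : lam * (Kg' * (Kv * (γ 0 * ρmax)) * T + Kg * (Kv * (2 * γ 0 * T))
      + Kg * (Kv2 * (γ 0 * ρmax)) * (SR' + SR'))
      ≤ Δt * ω0 * (Kv * (2 * Kg + Kg' * ρmax) + 2 * Kv2 * Kg * ρmax) * T := by
    have step0 : lam * (Kg' * (Kv * (γ 0 * ρmax)) * T + Kg * (Kv * (2 * γ 0 * T))
        + Kg * (Kv2 * (γ 0 * ρmax)) * (SR' + SR'))
        ≤ lam * (Kg' * (Kv * (γ 0 * ρmax)) * T + Kg * (Kv * (2 * γ 0 * T))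
          + Kg * (Kv2 * (γ 0 * ρmax)) * (T + T)) := by
      refine mul_le_mul_of_nonneg_left ?_ hlam.le
      have hmono : Kg * (Kv2 * (γ 0 * ρmax)) * (SR' + SR')
          ≤ Kg * (Kv2 * (γ 0 * ρmax)) * (T + T) :=
        mul_le_mul_of_nonneg_left (by linarith [htR'le]) hC3nn
      linarith
    have e1 : lam * (Kg' * (Kv * (γ 0 * ρmax)) * T + Kg * (Kv * (2 * γ 0 * T))
        + Kg * (Kv2 * (γ 0 * ρmax)) * (T + T))
        = (lam * γ 0) * ((Kg' * Kv * ρmax + 2 * Kg * Kv + 2 * Kg * Kv2 * ρmax) * T) := by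
      ring
    have step1 : (lam * γ 0) * ((Kg' * Kv * ρmax + 2 * Kg * Kv + 2 * Kg * Kv2 * ρmax) * T)
        ≤ (Δt * ω0) * ((Kg' * Kv * ρmax + 2 * Kg * Kv + 2 * Kg * Kv2 * ρmax) * T) :=
      mul_le_mul_of_nonneg_right hlamγ0 (mul_nonneg hBnn hTnn)
    calc lam * (Kg' * (Kv * (γ 0 * ρmax)) * T + Kg * (Kv * (2 * γ 0 * T))
        + Kg * (Kv2 * (γ 0 * ρmax)) * (SR' + SR'))
        ≤ lam * (Kg' * (Kv * (γ 0 * ρmax)) * T + Kg * (Kv * (2 * γ 0 * T))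
          + Kg * (Kv2 * (γ 0 * ρmax)) * (T + T)) := step0
      _ = (lam * γ 0) * ((Kg' * Kv * ρmax + 2 * Kg * Kv + 2 * Kg * Kv2 * ρmax) * T) := e1
      _ ≤ (Δt * ω0) * ((Kg' * Kv * ρmax + 2 * Kg * Kv + 2 * Kg * Kv2 * ρmax) * T) := step1
      _ = Δt * ω0 * (Kv * (2 * Kg + Kg' * ρmax) + 2 * Kv2 * Kg * ρmax) * T := by ring
  have hexp : (1 + Δt * ω0 * (Kv * (2 * Kg + Kg' * ρmax) + 2 * Kv2 * Kg * ρmax)) * T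
      = T + Δt * ω0 * (Kv * (2 * Kg + Kg' * ρmax) + 2 * Kv2 * Kg * ρmax) * T := by ring
  rw [hexp]
  nlinarith [hstep1, hkey2]
end

section
/- If ρ : ℤ → I has summable differences, Σ_{j∈ℤ} |ρ_{j+1} − ρ_j| < ∞, then the scheme satisfies the discrete time-continuity estimate Δx·Σ_{j∈ℤ} |(Sρ)_j − ρ_j| ≤ Δt·(‖G‖·‖v'‖ + L1 + L2)·Σ_{j∈ℤ} |ρ_{j+1} − ρ_j|. -/
open Finset Set

theorem stmt8
    (ρmin ρmax Δx Δt : ℝ)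
    (hρmin : 0 ≤ ρmin) (hI : ρmin ≤ ρmax) (hΔx : 0 < Δx) (hΔt : 0 < Δt)
    (N : ℕ) (hN : 1 ≤ N)
    (γ : ℕ → ℝ) (hγnn : ∀ k < N, 0 ≤ γ k)
    (hγmono : ∀ k : ℕ, 1 ≤ k → k ≤ N - 1 → γ k ≤ γ (k - 1))
    (hγsum : ∑ k ∈ Finset.range N, γ k ≤ 1)
    (v v' : ℝ → ℝ)
    (hv : ∀ x ∈ Icc (0 : ℝ) ρmax, HasDerivWithinAt v (v' x) (Icc (0 : ℝ) ρmax) x)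
    (hv'cont : ContinuousOn v' (Icc (0 : ℝ) ρmax))
    (hvnn : ∀ x ∈ Icc (0 : ℝ) ρmax, 0 ≤ v x)
    (hv'np : ∀ x ∈ Icc (0 : ℝ) ρmax, v' x ≤ 0)
    (g g' : ℝ → ℝ)
    (hg : ∀ x ∈ Icc ρmin ρmax, HasDerivWithinAt g (g' x) (Icc ρmin ρmax) x)
    (hg'cont : ContinuousOn g' (Icc ρmin ρmax))
    (G : ℝ → ℝ → ℝ)
    (hGcons : ∀ r ∈ Icc ρmin ρmax, G r r = g r)
    (hGmono1 : ∀ b ∈ Icc ρmin ρmax, MonotoneOn (fun a => G a b) (Icc ρmin ρmax))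
    (hGmono2 : ∀ a ∈ Icc ρmin ρmax, AntitoneOn (fun b => G a b) (Icc ρmin ρmax))
    (L1 L2 : ℝ) (hL1 : 0 < L1) (hL2 : 0 < L2)
    (hLip1 : ∀ a ∈ Icc ρmin ρmax, ∀ b ∈ Icc ρmin ρmax,
      supIm v (Icc (0 : ℝ) ρmax) * |G a b - G b b| ≤ L1 * |a - b|)
    (hLip2 : ∀ a ∈ Icc ρmin ρmax, ∀ b ∈ Icc ρmin ρmax,
      supIm v (Icc (0 : ℝ) ρmax) * |G a b - G a a| ≤ L2 * |a - b|)
    (ρ : ℤ → ℝ) (hρ : ∀ j, ρ j ∈ Icc ρmin ρmax)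
    (hρdiff : Summable fun j : ℤ => |ρ (j + 1) - ρ j|) :
    (Summable fun j : ℤ => |schemeS (Δt / Δx) G v γ N ρ j - ρ j|) ∧
    Δx * ∑' j : ℤ, |schemeS (Δt / Δx) G v γ N ρ j - ρ j| ≤
      Δt * (supIm2 G (Icc ρmin ρmax) * supIm (fun x => |v' x|) (Icc (0 : ℝ) ρmax) + L1 + L2) *
        ∑' j : ℤ, |ρ (j + 1) - ρ j| := by
  have hρmax0 : (0:ℝ) ≤ ρmax := le_trans hρmin hI
  set lam := Δt / Δx with hlamdef
  have hlam : 0 ≤ lam := le_of_lt (div_pos hΔt hΔx)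
  set M := supIm2 G (Icc ρmin ρmax) with hMdef
  set Kv := supIm v (Icc (0:ℝ) ρmax) with hKvdef
  set Kv' := supIm (fun x => |v' x|) (Icc (0:ℝ) ρmax) with hKv'def
  have hminI : ρmin ∈ Icc ρmin ρmax := ⟨le_refl _, hI⟩
  have hmaxI : ρmax ∈ Icc ρmin ρmax := ⟨hI, le_refl _⟩
  -- bound on |G|
  have hcorner : ∀ a ∈ Icc ρmin ρmax, ∀ b ∈ Icc ρmin ρmax,
      |G a b| ≤ max |G ρmin ρmax| |G ρmax ρmin| := by
    intro a ha b hb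
    have h1 : G a b ≤ G ρmax ρmin :=
      le_trans ((hGmono2 a ha) hminI hb hb.1) ((hGmono1 ρmin hminI) ha hmaxI ha.2)
    have h2 : G ρmin ρmax ≤ G a b :=
      le_trans ((hGmono1 ρmax hmaxI) hminI ha ha.1) ((hGmono2 a ha) hb hmaxI hb.2)
    rw [abs_le]
    constructor
    · calc -(max |G ρmin ρmax| |G ρmax ρmin|) ≤ -|G ρmin ρmax| := by
            exact neg_le_neg (le_max_left _ _)
        _ ≤ G ρmin ρmax := neg_abs_le _
        _ ≤ G a b := h2
    · calc G a b ≤ G ρmax ρmin := h1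
        _ ≤ |G ρmax ρmin| := le_abs_self _
        _ ≤ max |G ρmin ρmax| |G ρmax ρmin| := le_max_right _ _
  have hbddG : BddAbove ((fun p : ℝ × ℝ => |G p.1 p.2|) '' (Icc ρmin ρmax ×ˢ Icc ρmin ρmax)) := by
    refine ⟨max |G ρmin ρmax| |G ρmax ρmin|, ?_⟩
    rintro x ⟨⟨a, b⟩, ⟨ha, hb⟩, rfl⟩
    exact hcorner a ha b hb
  have hMle : ∀ a ∈ Icc ρmin ρmax, ∀ b ∈ Icc ρmin ρmax, |G a b| ≤ M := by
    intro a ha b hb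
    exact le_csSup hbddG ⟨(a, b), ⟨ha, hb⟩, rfl⟩
  have hMnn : 0 ≤ M := by
    apply Real.sSup_nonneg
    rintro x ⟨p, _, rfl⟩
    exact abs_nonneg _
  -- bounds on v
  have hvcont : ContinuousOn v (Icc (0:ℝ) ρmax) := fun x hx => (hv x hx).continuousWithinAt
  have hbddv : BddAbove (v '' Icc (0:ℝ) ρmax) :=
    (isCompact_Icc.image_of_continuousOn hvcont).bddAbove
  have hKvle : ∀ x ∈ Icc (0:ℝ) ρmax, v x ≤ Kv := fun x hx => le_csSup hbddv ⟨x, hx, rfl⟩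
  have hbddv' : BddAbove ((fun x => |v' x|) '' Icc (0:ℝ) ρmax) :=
    (isCompact_Icc.image_of_continuousOn hv'cont.abs).bddAbove
  have hKv'le : ∀ x ∈ Icc (0:ℝ) ρmax, |v' x| ≤ Kv' := fun x hx => le_csSup hbddv' ⟨x, hx, rfl⟩
  have hKv'nn : 0 ≤ Kv' := by
    apply Real.sSup_nonneg
    rintro x ⟨y, _, rfl⟩
    exact abs_nonneg _
  have hvlip : ∀ x ∈ Icc (0:ℝ) ρmax, ∀ y ∈ Icc (0:ℝ) ρmax, |v y - v x| ≤ Kv' * |y - x| := by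
    intro x hx y hy
    have := Convex.norm_image_sub_le_of_norm_hasDerivWithin_le hv
      (fun z hz => by rw [Real.norm_eq_abs]; exact hKv'le z hz) (convex_Icc 0 ρmax) hx hy
    simpa [Real.norm_eq_abs] using this
  -- the nonlocal argument
  set s : ℤ → ℝ := fun j => ∑ k ∈ Finset.range N, γ k * ρ (j + (k:ℤ) + 1) with hsdef
  have hsmem : ∀ j, s j ∈ Icc (0:ℝ) ρmax := by
    intro j
    constructor
    · apply Finset.sum_nonneg
      intro k hk
      exact mul_nonneg (hγnn k (Finset.mem_range.1 hk))
        (le_trans hρmin (hρ (j + (k:ℤ) + 1)).1)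
    · calc ∑ k ∈ Finset.range N, γ k * ρ (j + (k:ℤ) + 1)
          ≤ ∑ k ∈ Finset.range N, γ k * ρmax := by
            apply Finset.sum_le_sum
            intro k hk
            exact mul_le_mul_of_nonneg_left (hρ (j + (k:ℤ) + 1)).2 (hγnn k (Finset.mem_range.1 hk))
        _ = (∑ k ∈ Finset.range N, γ k) * ρmax := by rw [Finset.sum_mul]
        _ ≤ 1 * ρmax := mul_le_mul_of_nonneg_right hγsum hρmax0
        _ = ρmax := one_mul _
  set D : ℤ → ℝ := fun m => |ρ (m + 1) - ρ m| with hDdef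
  have hDnn : ∀ m, 0 ≤ D m := fun m => abs_nonneg _
  have hsub : ∀ j : ℤ, |s j - s (j - 1)| ≤ ∑ k ∈ Finset.range N, γ k * D (j + k) := by
    intro j
    have h1 : s j - s (j - 1) = ∑ k ∈ Finset.range N, γ k * (ρ (j + (k:ℤ) + 1) - ρ (j + k)) := by
      rw [← Finset.sum_sub_distrib]
      apply Finset.sum_congr rfl
      intro k _
      have h2 : j - 1 + (k:ℤ) + 1 = j + k := by ring
      rw [h2]; ring
    rw [h1]
    calc |∑ k ∈ Finset.range N, γ k * (ρ (j + (k:ℤ) + 1) - ρ (j + k))|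
        ≤ ∑ k ∈ Finset.range N, |γ k * (ρ (j + (k:ℤ) + 1) - ρ (j + k))| :=
          Finset.abs_sum_le_sum_abs _ _
      _ = ∑ k ∈ Finset.range N, γ k * D (j + k) := by
          apply Finset.sum_congr rfl
          intro k hk
          rw [abs_mul, abs_of_nonneg (hγnn k (Finset.mem_range.1 hk))]
  have hVdiff : ∀ j : ℤ, |Vj v γ N ρ j - Vj v γ N ρ (j - 1)| ≤
      Kv' * ∑ k ∈ Finset.range N, γ k * D (j + k) := by
    intro j
    have h1 : |v (s j) - v (s (j - 1))| ≤ Kv' * |s j - s (j - 1)| :=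
      hvlip (s (j - 1)) (hsmem _) (s j) (hsmem _)
    calc |Vj v γ N ρ j - Vj v γ N ρ (j - 1)| = |v (s j) - v (s (j - 1))| := rfl
      _ ≤ Kv' * |s j - s (j - 1)| := h1
      _ ≤ Kv' * ∑ k ∈ Finset.range N, γ k * D (j + k) :=
          mul_le_mul_of_nonneg_left (hsub j) hKv'nn
  -- pointwise estimate
  have hkey : ∀ j : ℤ, |schemeS lam G v γ N ρ j - ρ j| ≤
      lam * (M * Kv' * ∑ k ∈ Finset.range N, γ k * D (j + k) + L1 * D (j - 1) + L2 * D j) := by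
    intro j
    have hVm1mem := hsmem (j - 1)
    have hVm1nn : 0 ≤ Vj v γ N ρ (j - 1) := hvnn _ hVm1mem
    have hVm1le : Vj v γ N ρ (j - 1) ≤ Kv := hKvle _ hVm1mem
    set a := ρ j with hadef
    set b := ρ (j + 1) with hbdef
    set c := ρ (j - 1) with hcdef
    set W := Vj v γ N ρ j with hWdef
    set W' := Vj v γ N ρ (j - 1) with hW'def
    have hA : G a b * W - G c a * W' =
        G a b * (W - W') + (G a b - G a a) * W' + (G a a - G c a) * W' := by ring
    have ht1 : |G a b * (W - W')| ≤ M * Kv' * ∑ k ∈ Finset.range N, γ k * D (j + k) := by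
      rw [abs_mul, mul_assoc]
      exact mul_le_mul (hMle a (hρ j) b (hρ (j + 1))) (hVdiff j) (abs_nonneg _) hMnn
    have ht2 : |(G a b - G a a) * W'| ≤ L2 * D j := by
      rw [abs_mul, abs_of_nonneg hVm1nn]
      calc |G a b - G a a| * W' ≤ |G a b - G a a| * Kv :=
            mul_le_mul_of_nonneg_left hVm1le (abs_nonneg _)
        _ = Kv * |G a b - G a a| := mul_comm _ _
        _ ≤ L2 * |a - b| := hLip2 a (hρ j) b (hρ (j + 1))
        _ = L2 * D j := by rw [abs_sub_comm]
    have ht3 : |(G a a - G c a) * W'| ≤ L1 * D (j - 1) := by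
      rw [abs_mul, abs_of_nonneg hVm1nn]
      have hD1 : D (j - 1) = |c - a| := by
        have : j - 1 + 1 = j := by ring
        simp only [hDdef, this, hcdef, hadef, abs_sub_comm]
      calc |G a a - G c a| * W' ≤ |G a a - G c a| * Kv :=
            mul_le_mul_of_nonneg_left hVm1le (abs_nonneg _)
        _ = Kv * |G c a - G a a| := by rw [abs_sub_comm]; exact mul_comm _ _
        _ ≤ L1 * |c - a| := hLip1 c (hρ (j - 1)) a (hρ j)
        _ = L1 * D (j - 1) := by rw [hD1]
    have hS : schemeS lam G v γ N ρ j - ρ j = -(lam * (G a b * W - G c a * W')) := by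
      simp only [schemeS]; ring
    rw [hS, abs_neg, abs_mul, abs_of_nonneg hlam]
    apply mul_le_mul_of_nonneg_left _ hlam
    calc |G a b * W - G c a * W'|
        = |G a b * (W - W') + (G a b - G a a) * W' + (G a a - G c a) * W'| := by rw [hA]
      _ ≤ |G a b * (W - W') + (G a b - G a a) * W'| + |(G a a - G c a) * W'| := abs_add_le _ _
      _ ≤ |G a b * (W - W')| + |(G a b - G a a) * W'| + |(G a a - G c a) * W'| := by
          exact add_le_add (abs_add_le _ _) le_rfl
      _ ≤ M * Kv' * (∑ k ∈ Finset.range N, γ k * D (j + k)) + L2 * D j + L1 * D (j - 1) := by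
          exact add_le_add (add_le_add ht1 ht2) ht3
      _ = M * Kv' * ∑ k ∈ Finset.range N, γ k * D (j + k) + L1 * D (j - 1) + L2 * D j := by ring
  -- summability machinery
  have hD : Summable D := hρdiff
  have hshift : ∀ c : ℤ, Summable (fun j : ℤ => D (j + c)) := by
    intro c
    have := (Equiv.addRight c).summable_iff.mpr hD
    simpa [Function.comp_def] using this
  have htshift : ∀ c : ℤ, (∑' j : ℤ, D (j + c)) = ∑' j : ℤ, D j := by
    intro c
    have := (Equiv.addRight c).tsum_eq D
    simpa using this
  have hDm1 : Summable (fun j : ℤ => D (j - 1)) := by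
    simp only [sub_eq_add_neg]; exact hshift (-1)
  have htDm1 : (∑' j : ℤ, D (j - 1)) = ∑' j : ℤ, D j := by
    simp only [sub_eq_add_neg]; exact htshift (-1)
  have hsum1 : ∀ k ∈ Finset.range N, Summable (fun j : ℤ => γ k * D (j + k)) :=
    fun k _ => (hshift (k : ℤ)).mul_left (γ k)
  have hS1 : Summable (fun j : ℤ => ∑ k ∈ Finset.range N, γ k * D (j + k)) :=
    summable_sum hsum1
  set T := ∑' j : ℤ, D j with hTdef
  have hTnn : 0 ≤ T := tsum_nonneg hDnn
  have htS1 : (∑' j : ℤ, ∑ k ∈ Finset.range N, γ k * D (j + k)) =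
      (∑ k ∈ Finset.range N, γ k) * T := by
    rw [Summable.tsum_finsetSum hsum1, Finset.sum_mul]
    apply Finset.sum_congr rfl
    intro k _
    rw [tsum_mul_left, htshift (k : ℤ)]
  set B : ℤ → ℝ := fun j =>
    lam * (M * Kv' * ∑ k ∈ Finset.range N, γ k * D (j + k) + L1 * D (j - 1) + L2 * D j)
    with hBdef
  have hB : Summable B :=
    (((hS1.mul_left (M * Kv')).add (hDm1.mul_left L1)).add (hD.mul_left L2)).mul_left lam
  have hLHS : Summable (fun j : ℤ => |schemeS lam G v γ N ρ j - ρ j|) :=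
    Summable.of_nonneg_of_le (fun j => abs_nonneg _) hkey hB
  refine ⟨hLHS, ?_⟩
  have htB : (∑' j : ℤ, B j) =
      lam * (M * Kv' * ((∑ k ∈ Finset.range N, γ k) * T) + L1 * T + L2 * T) := by
    simp only [hBdef]
    rw [tsum_mul_left]
    congr 1
    rw [Summable.tsum_add ((hS1.mul_left (M * Kv')).add (hDm1.mul_left L1)) (hD.mul_left L2),
        Summable.tsum_add (hS1.mul_left (M * Kv')) (hDm1.mul_left L1),
        tsum_mul_left, tsum_mul_left, tsum_mul_left, htS1, htDm1]
  have hmain : (∑' j : ℤ, |schemeS lam G v γ N ρ j - ρ j|) ≤ ∑' j : ℤ, B j :=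
    Summable.tsum_le_tsum hkey hLHS hB
  have hγ0 : 0 ≤ ∑ k ∈ Finset.range N, γ k :=
    Finset.sum_nonneg fun k hk => hγnn k (Finset.mem_range.1 hk)
  have hfinal : (∑' j : ℤ, B j) ≤ lam * ((M * Kv' + L1 + L2) * T) := by
    rw [htB]
    apply mul_le_mul_of_nonneg_left _ hlam
    have h1 : M * Kv' * ((∑ k ∈ Finset.range N, γ k) * T) ≤ M * Kv' * T := by
      have := mul_le_mul_of_nonneg_right hγsum hTnn
      rw [one_mul] at this
      exact mul_le_mul_of_nonneg_left this (mul_nonneg hMnn hKv'nn)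
    nlinarith [mul_nonneg hL1.le hTnn, mul_nonneg hL2.le hTnn]
  have hΔxlam : Δx * lam = Δt := by
    rw [hlamdef]; field_simp [hΔx.ne']
  calc Δx * ∑' j : ℤ, |schemeS lam G v γ N ρ j - ρ j|
      ≤ Δx * ∑' j : ℤ, B j := mul_le_mul_of_nonneg_left hmain hΔx.le
    _ ≤ Δx * (lam * ((M * Kv' + L1 + L2) * T)) := mul_le_mul_of_nonneg_left hfinal hΔx.le
    _ = (Δx * lam) * ((M * Kv' + L1 + L2) * T) := by ring
    _ = Δt * (M * Kv' + L1 + L2) * T := by rw [hΔxlam]; ring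
end

section
/- Under the coordinatewise Lipschitz assumption and the CFL condition λ·(L1 + L2) ≤ 1, for any fixed values V, W ∈ [0, ‖v‖] the map H(u, w, z) := w − λ·( G(w, z)·V − G(u, w)·W ) is nondecreasing in each of its three arguments u, w, z on I×I×I. -/
open Set

theorem stmt11
    (ρmin ρmax Δx Δt : ℝ)
    (hρmin : 0 ≤ ρmin) (hI : ρmin ≤ ρmax) (hΔx : 0 < Δx) (hΔt : 0 < Δt)
    (v v' : ℝ → ℝ)
    (hv : ∀ x ∈ Icc (0 : ℝ) ρmax, HasDerivWithinAt v (v' x) (Icc (0 : ℝ) ρmax) x)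
    (hv'cont : ContinuousOn v' (Icc (0 : ℝ) ρmax))
    (hvnn : ∀ x ∈ Icc (0 : ℝ) ρmax, 0 ≤ v x)
    (hv'np : ∀ x ∈ Icc (0 : ℝ) ρmax, v' x ≤ 0)
    (g g' : ℝ → ℝ)
    (hg : ∀ x ∈ Icc ρmin ρmax, HasDerivWithinAt g (g' x) (Icc ρmin ρmax) x)
    (hg'cont : ContinuousOn g' (Icc ρmin ρmax))
    (G : ℝ → ℝ → ℝ)
    (hGcons : ∀ r ∈ Icc ρmin ρmax, G r r = g r)
    (hGmono1 : ∀ b ∈ Icc ρmin ρmax, MonotoneOn (fun a => G a b) (Icc ρmin ρmax))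
    (hGmono2 : ∀ a ∈ Icc ρmin ρmax, AntitoneOn (fun b => G a b) (Icc ρmin ρmax))
    (L1 L2 : ℝ) (hL1 : 0 < L1) (hL2 : 0 < L2)
    (hLip1 : ∀ a ∈ Icc ρmin ρmax, ∀ a' ∈ Icc ρmin ρmax, ∀ b ∈ Icc ρmin ρmax,
      supIm v (Icc (0 : ℝ) ρmax) * |G a b - G a' b| ≤ L1 * |a - a'|)
    (hLip2 : ∀ a ∈ Icc ρmin ρmax, ∀ b ∈ Icc ρmin ρmax, ∀ b' ∈ Icc ρmin ρmax,
      supIm v (Icc (0 : ℝ) ρmax) * |G a b - G a b'| ≤ L2 * |b - b'|)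
    (hCFL : (Δt / Δx) * (L1 + L2) ≤ 1)
    (V W : ℝ) (hV : V ∈ Icc (0 : ℝ) (supIm v (Icc (0 : ℝ) ρmax)))
    (hW : W ∈ Icc (0 : ℝ) (supIm v (Icc (0 : ℝ) ρmax))) :
    (∀ u ∈ Icc ρmin ρmax, ∀ u' ∈ Icc ρmin ρmax, ∀ w ∈ Icc ρmin ρmax, ∀ z ∈ Icc ρmin ρmax,
      u ≤ u' →
        w - (Δt / Δx) * (G w z * V - G u w * W) ≤ w - (Δt / Δx) * (G w z * V - G u' w * W)) ∧
    (∀ u ∈ Icc ρmin ρmax, ∀ w ∈ Icc ρmin ρmax, ∀ w' ∈ Icc ρmin ρmax, ∀ z ∈ Icc ρmin ρmax,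
      w ≤ w' →
        w - (Δt / Δx) * (G w z * V - G u w * W) ≤ w' - (Δt / Δx) * (G w' z * V - G u w' * W)) ∧
    (∀ u ∈ Icc ρmin ρmax, ∀ w ∈ Icc ρmin ρmax, ∀ z ∈ Icc ρmin ρmax, ∀ z' ∈ Icc ρmin ρmax,
      z ≤ z' →
        w - (Δt / Δx) * (G w z * V - G u w * W) ≤ w - (Δt / Δx) * (G w z' * V - G u w * W)) := by
  set S := supIm v (Icc (0 : ℝ) ρmax) with hS
  have hlam : 0 ≤ Δt / Δx := le_of_lt (div_pos hΔt hΔx)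
  refine ⟨?_, ?_, ?_⟩
  · intro u hu u' hu' w hw z hz huu'
    have hG : G u w ≤ G u' w := hGmono1 w hw hu hu' huu'
    nlinarith [mul_le_mul_of_nonneg_left (mul_le_mul_of_nonneg_right hG hW.1) hlam]
  · intro u hu w hw w' hw' z hz hww'
    have h1 := hLip1 w hw w' hw' z hz
    have h2 := hLip2 u hu w hw w' hw'
    have habs1 : |G w z - G w' z| = |G w' z - G w z| := abs_sub_comm _ _
    have habs2 : |w - w'| = w' - w := by rw [abs_sub_comm]; exact abs_of_nonneg (by linarith)
    rw [habs1, habs2] at h1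
    rw [habs2] at h2
    have hA : V * (G w' z - G w z) ≤ L1 * (w' - w) := by
      calc V * (G w' z - G w z) ≤ V * |G w' z - G w z| :=
            mul_le_mul_of_nonneg_left (le_abs_self _) hV.1
        _ ≤ S * |G w' z - G w z| := mul_le_mul_of_nonneg_right hV.2 (abs_nonneg _)
        _ ≤ L1 * (w' - w) := h1
    have hB : W * (G u w - G u w') ≤ L2 * (w' - w) := by
      calc W * (G u w - G u w') ≤ W * |G u w - G u w'| :=
            mul_le_mul_of_nonneg_left (le_abs_self _) hW.1
        _ ≤ S * |G u w - G u w'| := mul_le_mul_of_nonneg_right hW.2 (abs_nonneg _)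
        _ ≤ L2 * (w' - w) := h2
    have hsum : V * (G w' z - G w z) + W * (G u w - G u w') ≤ (L1 + L2) * (w' - w) := by
      linarith
    have hmul := mul_le_mul_of_nonneg_left hsum hlam
    have hcfl : (Δt / Δx) * ((L1 + L2) * (w' - w)) ≤ w' - w := by
      have := mul_le_mul_of_nonneg_right hCFL (show (0:ℝ) ≤ w' - w by linarith)
      nlinarith
    nlinarith
  · intro u hu w hw z hz z' hz' hzz'
    have hG : G w z' ≤ G w z := hGmono2 w hw hz hz' hzz'
    nlinarith [mul_le_mul_of_nonneg_left (mul_le_mul_of_nonneg_right hG hV.1) hlam]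
end
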